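/- arXiv:1612.09407 — 6 statements merged into one kernel-verified Lean document; each statement's English description precedes it below -/
import Mathlib

section
/- For every n ≥ 1, the following identity of formal power series holds in ℚ[[t_1,…,t_n]]: Z_FKMT(t_1,…,t_n) · ∏_{i=1}^n (exp(s_i) − 1)^2 = ∏_{i=1}^n ((1 − s_i)·exp(s_i) − 1), where s_i = t_i + t_{i+1} + ⋯ + t_n. (This is the denominator-cleared form of the identity Z_FKMT(t_1,…,t_n) = ∏_{i=1}^n ((1 − s_i)e^{s_i} − 1)/(e^{s_i} − 1)^2.) -/
/-- Desingularized multiple zeta value `ζ_FKMT(−k_1,…,−k_n)`, given by the closed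
formula in terms of Bernoulli numbers (with `B_1 = −1/2`, i.e. Mathlib's `bernoulli`).
The sum runs over upper-triangular families `ν = (ν_{ij})` (encoded as `ν : Fin n → Fin n → ℕ`
vanishing for `j < i`) whose `i`-th column sums to `k_i`. -/
noncomputable def zetaFKMT {n : ℕ} (k : Fin n → ℕ) : ℚ :=
  (-1 : ℚ) ^ (∑ i, k i) *
    ∑ᶠ ν ∈ {ν : Fin n → Fin n → ℕ |
        (∀ i j : Fin n, j < i → ν i j = 0) ∧ ∀ j : Fin n, (∑ i, ν i j) = k j},
      ∏ i : Fin n,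
        (((k i).factorial : ℚ) / ∏ j : Fin n, ((ν i j).factorial : ℚ)) *
          bernoulli ((∑ j, ν i j) + 1)

/-- Generating series `Z_FKMT(t_1,…,t_n) = Σ_k ζ_FKMT(−k_1,…,−k_n) ∏ (−t_i)^{k_i}/k_i!`
in `ℚ[[t_1,…,t_n]]`. -/
noncomputable def ZFKMT (n : ℕ) : MvPowerSeries (Fin n) ℚ :=
  fun d => zetaFKMT (fun i => d i) * ∏ i, ((-1 : ℚ) ^ (d i) / ((d i).factorial : ℚ))

/-- `exp(u) = Σ_{m≥0} u^m/m!` for a multivariable power series `u` with zero constant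
term; for such `u` only the terms `m ≤ |d|` contribute to the coefficient at `d`. -/
noncomputable def expPS {n : ℕ} (u : MvPowerSeries (Fin n) ℚ) : MvPowerSeries (Fin n) ℚ :=
  fun d => ∑ m ∈ Finset.range ((∑ i, d i) + 1),
    MvPowerSeries.coeff d (u ^ m) / (m.factorial : ℚ)

/-- `s_i = t_i + t_{i+1} + ⋯ + t_n`. -/
noncomputable def sVar (n : ℕ) (i : Fin n) : MvPowerSeries (Fin n) ℚ :=
  ∑ j ∈ Finset.Ici i, MvPowerSeries.X j



section StepA
open PowerSeries

noncomputable def Bprime : PowerSeries ℚ := PowerSeries.mk fun m => bernoulli (m+1) / m.factorial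

lemma deriv_bernoulliPS : d⁄dX ℚ (bernoulliPowerSeries ℚ) = Bprime := by
  ext n
  rw [coeff_derivative]
  simp only [bernoulliPowerSeries, coeff_mk, Bprime, Nat.factorial_succ]
  push_cast
  have h1 : (n.factorial : ℚ) ≠ 0 := by positivity
  have h2 : ((n:ℚ) + 1) ≠ 0 := by positivity
  field_simp
  ring_nf
  simp

lemma derivExpPS : d⁄dX ℚ (exp ℚ) = exp ℚ := by
  ext n
  rw [coeff_derivative, coeff_exp, coeff_exp]
  simp only [Nat.factorial_succ, map_div₀, map_one, map_natCast]
  push_cast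
  have h1 : (n.factorial : ℚ) ≠ 0 := by positivity
  have h2 : ((n:ℚ) + 1) ≠ 0 := by positivity
  field_simp

lemma step_A : Bprime * (exp ℚ - 1)^2 = (1 - X) * exp ℚ - 1 := by
  have hB : bernoulliPowerSeries ℚ * (exp ℚ - 1) = X := bernoulliPowerSeries_mul_exp_sub_one ℚ
  have hd := congrArg (d⁄dX ℚ) hB
  rw [Derivation.leibniz, derivative_X, deriv_bernoulliPS] at hd
  have hdE : d⁄dX ℚ (exp ℚ - 1) = exp ℚ := by
    rw [map_sub, derivExpPS, Derivation.map_one_eq_zero, sub_zero]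
  rw [hdE] at hd
  -- hd : bernoulliPowerSeries ℚ • exp ℚ + (exp ℚ - 1) • Bprime = 1
  have h2 := congrArg (· * (exp ℚ - 1)) hd
  simp only [smul_eq_mul, add_mul, one_mul] at h2
  -- B * E * (E-1) + (E-1) * B' * (E-1) = (E-1)
  have : bernoulliPowerSeries ℚ * exp ℚ * (exp ℚ - 1) = X * exp ℚ := by
    rw [mul_right_comm, hB]
  rw [this] at h2
  have : (exp ℚ - 1) * Bprime * (exp ℚ - 1) = Bprime * (exp ℚ - 1)^2 := by ring
  rw [this] at h2
  linear_combination h2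

end StepA

open MvPowerSeries Finset

lemma prod_X_pow {n : ℕ} (s : Finset (Fin n)) (k : Fin n → ℕ) :
    (∏ j ∈ s, (MvPowerSeries.X j : MvPowerSeries (Fin n) ℚ) ^ (k j)) =
      MvPowerSeries.monomial (∑ j ∈ s, Finsupp.single j (k j)) 1 := by
  classical
  induction s using Finset.induction_on with
  | empty => simp [MvPowerSeries.monomial_zero_one]
  | @insert a t ha ih =>
    rw [Finset.prod_insert ha, Finset.sum_insert ha, ih, X_pow_eq,
      monomial_mul_monomial, one_mul]

lemma sum_single_apply {n : ℕ} (s : Finset (Fin n)) (k : Fin n → ℕ) (j : Fin n) :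
    (∑ j' ∈ s, Finsupp.single j' (k j')) j = if j ∈ s then k j else 0 := by
  classical
  rw [Finsupp.finset_sum_apply]
  simp_rw [Finsupp.single_apply]
  rw [Finset.sum_ite_eq' s j k]

lemma sum_Ici_eq {n : ℕ} (i : Fin n) (d : Fin n →₀ ℕ) (h1 : ∀ j, j < i → d j = 0) :
    ∑ j ∈ Finset.Ici i, d j = ∑ j, d j := by
  refine Finset.sum_subset (Finset.subset_univ _) fun j _ hj => ?_
  exact h1 j (lt_of_not_ge (by simpa using hj))

lemma coeff_sVar_pow {n : ℕ} (i : Fin n) (m : ℕ) (d : Fin n →₀ ℕ) :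
    MvPowerSeries.coeff d (sVar n i ^ m) =
      if (∀ j, j < i → d j = 0) ∧ (∑ j, d j) = m then
        (m.factorial : ℚ) / ∏ j, ((d j).factorial : ℚ) else 0 := by
  classical
  rw [sVar, Finset.sum_pow_eq_sum_piAntidiag, map_sum]
  have hcoeff : ∀ k ∈ piAntidiag (Ici i) m,
      MvPowerSeries.coeff d ((Nat.multinomial (Ici i) k : MvPowerSeries (Fin n) ℚ) *
        ∏ j ∈ Ici i, (MvPowerSeries.X j : MvPowerSeries (Fin n) ℚ) ^ k j) =
      (Nat.multinomial (Ici i) k : ℚ) * (if d = ∑ j ∈ Ici i, Finsupp.single j (k j) then 1 else 0) := by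
    intro k _
    rw [prod_X_pow, ← map_natCast (MvPowerSeries.C (σ := Fin n) (R := ℚ)), MvPowerSeries.coeff_C_mul,
      MvPowerSeries.coeff_monomial]
  rw [Finset.sum_congr rfl hcoeff]
  by_cases h : (∀ j, j < i → d j = 0) ∧ (∑ j, d j) = m
  · rw [if_pos h]
    obtain ⟨h1, h2⟩ := h
    have hdmem : (⇑d : Fin n → ℕ) ∈ piAntidiag (Ici i) m := by
      rw [mem_piAntidiag]
      constructor
      · rw [sum_Ici_eq i d h1, h2]
      · intro j hj
        simp only [mem_Ici]
        by_contra hji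
        exact hj (h1 j (lt_of_not_ge hji))
    have hdeq : d = ∑ j ∈ Ici i, Finsupp.single j (d j) := by
      ext j
      rw [sum_single_apply]
      by_cases hji : j ∈ Ici i
      · rw [if_pos hji]
      · rw [if_neg hji]
        exact h1 j (lt_of_not_ge (by simpa using hji))
    rw [Finset.sum_eq_single_of_mem (⇑d) hdmem]
    · rw [if_pos hdeq, mul_one]
      have hspec := Nat.multinomial_spec (Ici i) (⇑d)
      have hsum : (∑ j ∈ Ici i, d j) = m := by
        rw [sum_Ici_eq i d h1, h2]
      have hprod : (∏ j, ((d j).factorial : ℚ)) = ∏ j ∈ Ici i, ((d j).factorial : ℚ) := by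
        refine (Finset.prod_subset (Finset.subset_univ _) (fun j _ hj => ?_)).symm
        rw [h1 j (lt_of_not_ge (by simpa using hj)), Nat.factorial_zero, Nat.cast_one]
      rw [hprod, eq_div_iff (by positivity)]
      rw [← hsum, ← hspec]
      push_cast
      ring
    · intro k hk hkd
      rw [if_neg, mul_zero]
      intro hdk
      apply hkd
      funext j
      rw [mem_piAntidiag] at hk
      by_cases hji : j ∈ Ici i
      · have := congrArg (fun f : Fin n →₀ ℕ => f j) hdk
        simpa [sum_single_apply, hji] using this.symm
      · have hk0 : k j = 0 := by
          by_contra hne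
          exact hji (hk.2 j hne)
        have hd0 : d j = 0 := by
          have := congrArg (fun f : Fin n →₀ ℕ => f j) hdk
          simpa [sum_single_apply, hji] using this
        rw [hk0, hd0]
  · rw [if_neg h]
    refine Finset.sum_eq_zero fun k hk => ?_
    rw [if_neg, mul_zero]
    intro hdk
    apply h
    rw [mem_piAntidiag] at hk
    have hval : ∀ j, d j = if j ∈ Ici i then k j else 0 := by
      intro j
      rw [hdk, sum_single_apply]
    constructor
    · intro j hj
      rw [hval j, if_neg (by simpa using not_le.mpr hj)]
    · rw [← hk.1]
      rw [← Finset.sum_subset (Finset.subset_univ (Ici i)) (fun j _ hj => ?_)]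
      · exact Finset.sum_congr rfl fun j hj => by rw [hval j, if_pos hj]
      · rw [hval j, if_neg hj]

lemma coeff_sVar_pow_ne {n : ℕ} (i : Fin n) {m : ℕ} {d : Fin n →₀ ℕ} (h : (∑ j, d j) ≠ m) :
    MvPowerSeries.coeff d (sVar n i ^ m) = 0 := by
  rw [coeff_sVar_pow, if_neg (fun hc => h hc.2)]

noncomputable def psi {n : ℕ} (i : Fin n) (f : PowerSeries ℚ) : MvPowerSeries (Fin n) ℚ :=
  fun d => ∑ m ∈ Finset.range ((∑ j, d j) + 1),
    PowerSeries.coeff m f * MvPowerSeries.coeff d (sVar n i ^ m)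

lemma coeff_psi {n : ℕ} (i : Fin n) (f : PowerSeries ℚ) (d : Fin n →₀ ℕ) :
    MvPowerSeries.coeff d (psi i f) =
      PowerSeries.coeff (∑ j, d j) f * MvPowerSeries.coeff d (sVar n i ^ (∑ j, d j)) := by
  show (∑ m ∈ Finset.range ((∑ j, d j) + 1), _) = _
  rw [Finset.sum_eq_single (∑ j, d j)]
  · intro m _ hm
    rw [coeff_sVar_pow_ne i (Ne.symm hm), mul_zero]
  · intro h
    exact absurd (Finset.self_mem_range_succ _) h

lemma finsupp_eq_zero_of_sum {n : ℕ} {d : Fin n →₀ ℕ} (h : (∑ j, d j) = 0) : d = 0 := by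
  ext j
  exact Finset.sum_eq_zero_iff.mp h j (Finset.mem_univ j)

lemma psi_mul {n : ℕ} (i : Fin n) (f g : PowerSeries ℚ) :
    psi i (f * g) = psi i f * psi i g := by
  ext d
  rw [MvPowerSeries.coeff_mul, coeff_psi, PowerSeries.coeff_mul, Finset.sum_mul]
  have step : ∀ p ∈ Finset.HasAntidiagonal.antidiagonal (∑ j, d j),
      PowerSeries.coeff p.1 f * PowerSeries.coeff p.2 g *
          MvPowerSeries.coeff d (sVar n i ^ (∑ j, d j)) =
      ∑ q ∈ Finset.HasAntidiagonal.antidiagonal d, PowerSeries.coeff p.1 f * PowerSeries.coeff p.2 g *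
        (MvPowerSeries.coeff q.1 (sVar n i ^ p.1) *
          MvPowerSeries.coeff q.2 (sVar n i ^ p.2)) := by
    intro p hp
    rw [Finset.HasAntidiagonal.mem_antidiagonal] at hp
    rw [← Finset.mul_sum, ← MvPowerSeries.coeff_mul, ← pow_add, hp]
  rw [Finset.sum_congr rfl step, Finset.sum_comm]
  refine Finset.sum_congr rfl fun q hq => ?_
  rw [Finset.HasAntidiagonal.mem_antidiagonal] at hq
  rw [coeff_psi, coeff_psi]
  have hdeg : (∑ j, q.1 j) + (∑ j, q.2 j) = ∑ j, d j := by
    rw [← hq]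
    rw [← Finset.sum_add_distrib]
    exact Finset.sum_congr rfl fun j _ => rfl
  rw [Finset.sum_eq_single ((∑ j, q.1 j), (∑ j, q.2 j))]
  · ring
  · intro p _ hne
    rcases eq_or_ne p.1 (∑ j, q.1 j) with h1 | h1
    · have h2 : p.2 ≠ ∑ j, q.2 j := fun h2 => hne (Prod.ext h1 h2)
      rw [coeff_sVar_pow_ne i (Ne.symm h2)]
      ring
    · rw [coeff_sVar_pow_ne i (Ne.symm h1)]
      ring
  · intro habs
    exact absurd (Finset.HasAntidiagonal.mem_antidiagonal.mpr hdeg) habs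

lemma psi_one {n : ℕ} (i : Fin n) : psi i (1 : PowerSeries ℚ) = 1 := by
  ext d
  rw [coeff_psi, PowerSeries.coeff_one, MvPowerSeries.coeff_one]
  by_cases h : (∑ j, d j) = 0
  · have hd : d = 0 := finsupp_eq_zero_of_sum h
    rw [if_pos h, if_pos hd, h, pow_zero, one_mul, MvPowerSeries.coeff_one, if_pos hd]
  · rw [if_neg h, if_neg (fun hd => h (by rw [hd]; simp)), zero_mul]

lemma psi_sub {n : ℕ} (i : Fin n) (f g : PowerSeries ℚ) :
    psi i (f - g) = psi i f - psi i g := by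
  ext d
  rw [map_sub, coeff_psi, coeff_psi, coeff_psi, map_sub, sub_mul]

lemma psi_X {n : ℕ} (i : Fin n) : psi i PowerSeries.X = sVar n i := by
  ext d
  rw [coeff_psi, PowerSeries.coeff_X]
  by_cases h : (∑ j, d j) = 1
  · rw [if_pos h, one_mul, h, pow_one]
  · rw [if_neg h, zero_mul, ← pow_one (sVar n i)]
    exact (coeff_sVar_pow_ne i h).symm

lemma psi_exp {n : ℕ} (i : Fin n) : psi i (PowerSeries.exp ℚ) = expPS (sVar n i) := by
  ext d
  show (∑ m ∈ Finset.range _, _) = (∑ m ∈ Finset.range _, _)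
  refine Finset.sum_congr rfl fun m _ => ?_
  rw [PowerSeries.coeff_exp]
  simp only [map_div₀, map_one, map_natCast, Algebra.algebraMap_self, RingHom.id_apply]
  rw [div_mul_eq_mul_div, one_mul]

lemma key_i {n : ℕ} (i : Fin n) :
    psi i Bprime * (expPS (sVar n i) - 1) ^ 2 = (1 - sVar n i) * expPS (sVar n i) - 1 := by
  have e1 : psi i (PowerSeries.exp ℚ - 1) = expPS (sVar n i) - 1 := by
    rw [psi_sub, psi_exp, psi_one]
  have lhs : psi i (Bprime * (PowerSeries.exp ℚ - 1) ^ 2) =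
      psi i Bprime * (expPS (sVar n i) - 1) ^ 2 := by
    rw [sq, psi_mul, psi_mul, e1, ← sq]
  rw [← lhs, step_A, psi_sub, psi_mul, psi_sub, psi_one, psi_X, psi_exp]

lemma coeff_psi_Bprime {n : ℕ} (i : Fin n) (e : Fin n →₀ ℕ) :
    MvPowerSeries.coeff e (psi i Bprime) =
      if ∀ j, j < i → e j = 0 then
        bernoulli ((∑ j, e j) + 1) / ∏ j, ((e j).factorial : ℚ) else 0 := by
  rw [coeff_psi, coeff_sVar_pow]
  by_cases h : ∀ j, j < i → e j = 0
  · rw [if_pos ⟨h, rfl⟩, if_pos h, Bprime, PowerSeries.coeff_mk]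
    have h1 : ((∑ j, e j).factorial : ℚ) ≠ 0 := by positivity
    have h2 : (∏ j, ((e j).factorial : ℚ)) ≠ 0 :=
      ne_of_gt (Finset.prod_pos fun j _ => by positivity)
    field_simp
  · rw [if_neg h, if_neg (fun hc => h hc.1), mul_zero]

lemma ZFKMT_eq_prod (n : ℕ) : ZFKMT n = ∏ i : Fin n, psi i Bprime := by
  classical
  ext d
  rw [MvPowerSeries.coeff_prod]
  simp_rw [coeff_psi_Bprime]
  rw [Finset.sum_congr rfl (fun l _ => Finset.prod_ite_zero (s := Finset.univ)
      (p := fun i => ∀ j, j < i → (l i) j = 0)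
      (f := fun i => bernoulli ((∑ j, l i j) + 1) / ∏ j, ((l i j).factorial : ℚ)))]
  set T := (Finset.finsuppAntidiag Finset.univ d).filter
      (fun l : Fin n →₀ (Fin n →₀ ℕ) => ∀ i ∈ Finset.univ, ∀ j, j < i → (l i) j = 0) with hT
  have hz : MvPowerSeries.coeff d (ZFKMT n) =
      ∑ l ∈ T, ∏ i : Fin n, bernoulli ((∑ j, l i j) + 1) / ∏ j, ((l i j).factorial : ℚ) := by
    have hcoeff : MvPowerSeries.coeff d (ZFKMT n) =
        zetaFKMT (fun i => d i) * ∏ i, ((-1:ℚ)^(d i) / ((d i).factorial : ℚ)) := rfl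
    rw [hcoeff, zetaFKMT]
    have hinj : Function.Injective
        (fun (l : Fin n →₀ (Fin n →₀ ℕ)) => (fun i j => l i j : Fin n → Fin n → ℕ)) := by
      intro a b hab
      ext i j
      exact congrFun (congrFun hab i) j
    have hset : {ν : Fin n → Fin n → ℕ |
        (∀ i j : Fin n, j < i → ν i j = 0) ∧ ∀ j : Fin n, (∑ i, ν i j) = (fun i => (d i : ℕ)) j} =
        ↑(T.image (fun l => (fun i j => l i j : Fin n → Fin n → ℕ))) := by
      ext ν
      simp only [Set.mem_setOf_eq, Finset.coe_image, Set.mem_image, Finset.mem_coe, hT,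
        Finset.mem_filter, Finset.mem_finsuppAntidiag, Finset.mem_univ, forall_true_left]
      constructor
      · rintro ⟨htri, hcol⟩
        refine ⟨Finsupp.equivFunOnFinite.symm (fun i => Finsupp.equivFunOnFinite.symm (ν i)),
          ⟨⟨?_, ?_⟩, ?_⟩, ?_⟩
        · ext j
          rw [Finsupp.finset_sum_apply]
          simpa using hcol j
        · exact Finset.subset_univ _
        · intro i j hji
          simpa using htri i j hji
        · funext i j
          simp
      · rintro ⟨l, ⟨⟨hsum, _⟩, htri⟩, rfl⟩
        constructor
        · intro i j hji
          exact htri i j hji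
        · intro j
          have := congrArg (fun f : Fin n →₀ ℕ => f j) hsum
          simpa [Finsupp.finset_sum_apply] using this
    rw [hset, finsum_mem_coe_finset, Finset.sum_image (fun a _ b _ h => hinj h)]
    rw [mul_comm, ← mul_assoc, Finset.mul_sum]
    refine Finset.sum_congr rfl fun l hl => ?_
    have hpow : ((-1:ℚ)) ^ (∑ i, (d i : ℕ)) = ∏ i, ((-1:ℚ)) ^ (d i : ℕ) :=
      (Finset.prod_pow_eq_pow_sum _ _ _).symm
    rw [hpow, ← Finset.prod_mul_distrib, ← Finset.prod_mul_distrib]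
    refine Finset.prod_congr rfl fun i _ => ?_
    have h1 : ((d i).factorial : ℚ) ≠ 0 := by positivity
    have h2 : (∏ j, ((l i j).factorial : ℚ)) ≠ 0 :=
      ne_of_gt (Finset.prod_pos fun j _ => by positivity)
    field_simp
    ring_nf
    rw [show (d i : ℕ) * 2 = 2 * d i from mul_comm _ _, pow_mul, neg_one_sq, one_pow, mul_one]
  rw [hz, hT, Finset.sum_filter]
  exact Finset.sum_congr rfl fun l _ => by split_ifs <;> rfl

/-- `Z_FKMT(t_1,…,t_n) ∏_i (e^{s_i} − 1)^2 = ∏_i ((1 − s_i) e^{s_i} − 1)`,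
the denominator-cleared form of `Z_FKMT = ∏ ((1−s_i)e^{s_i}−1)/(e^{s_i}−1)^2`. -/
theorem ZFKMT_closed_form (n : ℕ) (hn : 1 ≤ n) :
    ZFKMT n * ∏ i : Fin n, (expPS (sVar n i) - 1) ^ 2 =
      ∏ i : Fin n, ((1 - sVar n i) * expPS (sVar n i) - 1) := by
  rw [ZFKMT_eq_prod, ← Finset.prod_mul_distrib]
  exact Finset.prod_congr rfl fun i _ => key_i i
end

section
/- For every n ≥ 2, the following identity of formal power series holds in ℚ[[t_1,…,t_n]]: Z_FKMT(t_1,…,t_n) = Z_FKMT(t_2,…,t_n) · Z_FKMT(t_1+⋯+t_n), where Z_FKMT(t_2,…,t_n) denotes the (n−1)-variable generating series Σ_{(k_2,…,k_n)∈ℕ^{n−1}} ζ_FKMT(−k_2,…,−k_n) ∏_{i=2}^n (−t_i)^{k_i}/k_i! regarded inside ℚ[[t_1,…,t_n]], and Z_FKMT(t_1+⋯+t_n) denotes the series Σ_{m≥0} ζ_FKMT(−m) (−1)^m (t_1+⋯+t_n)^m/m!. -/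
/-- The `(n−1)`-variable generating series `Z_FKMT(t_2,…,t_n)` regarded inside
`ℚ[[t_1,…,t_n]]`: its coefficient at a monomial involving `t_1` is zero. -/
noncomputable def ZFKMTtail (m : ℕ) : MvPowerSeries (Fin (m + 2)) ℚ :=
  fun d =>
    if d 0 = 0 then
      zetaFKMT (fun i : Fin (m + 1) => d i.succ) *
        ∏ i : Fin (m + 1), ((-1 : ℚ) ^ (d i.succ) / ((d i.succ).factorial : ℚ))
    else 0

/-- The series `Z_FKMT(t_1+⋯+t_n) = Σ_{k≥0} ζ_FKMT(−k) (−1)^k (t_1+⋯+t_n)^k/k!`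
regarded inside `ℚ[[t_1,…,t_n]]`; its coefficient at `d` is
`ζ_FKMT(−|d|)(−1)^{|d|}/∏ d_i!` (via the multinomial theorem). -/
noncomputable def ZFKMTdiag (m : ℕ) : MvPowerSeries (Fin (m + 2)) ℚ :=
  fun d =>
    zetaFKMT (fun _ : Fin 1 => ∑ i, d i) * (-1 : ℚ) ^ (∑ i, d i) /
      ∏ i, ((d i).factorial : ℚ)

/-! ### Auxiliary definitions and lemmas -/

/-- The set of upper-triangular matrices with prescribed column sums. -/
def triSet {n : ℕ} (k : Fin n → ℕ) : Set (Fin n → Fin n → ℕ) :=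
  {ν : Fin n → Fin n → ℕ |
      (∀ i j : Fin n, j < i → ν i j = 0) ∧ ∀ j : Fin n, (∑ i, ν i j) = k j}

lemma triSet_finite {n : ℕ} (k : Fin n → ℕ) : (triSet k).Finite := by
  have h : triSet k ⊆ Set.pi Set.univ
      (fun _ : Fin n => Set.pi Set.univ (fun j : Fin n => Set.Iic (k j))) := by
    intro ν hν
    simp only [Set.mem_pi, Set.mem_univ, Set.mem_Iic, forall_true_left]
    intro i j
    rw [← hν.2 j]
    exact Finset.single_le_sum (f := fun i => ν i j) (fun _ _ => Nat.zero_le _)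
      (Finset.mem_univ i)
  exact Set.Finite.subset
    (Set.Finite.pi fun _ => Set.Finite.pi fun j => Set.finite_Iic (k j)) h

lemma zetaFKMT_eq {n : ℕ} (k : Fin n → ℕ) :
    zetaFKMT k = (-1 : ℚ) ^ (∑ i, k i) *
      ∑ ν ∈ (triSet_finite k).toFinset,
        ∏ i, (((k i).factorial : ℚ) / ∏ j, ((ν i j).factorial : ℚ)) *
          bernoulli ((∑ j, ν i j) + 1) := by
  rw [zetaFKMT]
  congr 1
  exact finsum_mem_eq_finite_toFinset_sum _ (triSet_finite k)

/-- The canonical summand. -/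
noncomputable def GG {n : ℕ} (ν : Fin n → Fin n → ℕ) : ℚ :=
  ∏ i, bernoulli ((∑ j, ν i j) + 1) * (∏ j, ((ν i j).factorial : ℚ))⁻¹

lemma lemA {n : ℕ} (k : Fin n → ℕ) :
    zetaFKMT k * ∏ i, ((-1 : ℚ) ^ (k i) / ((k i).factorial : ℚ)) =
      ∑ ν ∈ (triSet_finite k).toFinset, GG ν := by
  rw [zetaFKMT_eq k, Finset.prod_div_distrib, Finset.prod_pow_eq_pow_sum]
  have h1 : ((-1 : ℚ) ^ (∑ i, k i)) * ((-1 : ℚ) ^ (∑ i, k i)) = 1 := by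
    rw [← pow_add]; exact Even.neg_one_pow ⟨_, rfl⟩
  have hP : ∀ i : Fin n, ((k i).factorial : ℚ) ≠ 0 :=
    fun i => Nat.cast_ne_zero.2 (Nat.factorial_ne_zero _)
  calc ((-1 : ℚ) ^ (∑ i, k i) *
          ∑ ν ∈ (triSet_finite k).toFinset,
            ∏ i, (((k i).factorial : ℚ) / ∏ j, ((ν i j).factorial : ℚ)) *
              bernoulli ((∑ j, ν i j) + 1)) *
        ((-1 : ℚ) ^ (∑ i, k i) / ∏ i, ((k i).factorial : ℚ))
      = (((-1 : ℚ) ^ (∑ i, k i)) * ((-1 : ℚ) ^ (∑ i, k i))) *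
        ((∑ ν ∈ (triSet_finite k).toFinset,
            ∏ i, (((k i).factorial : ℚ) / ∏ j, ((ν i j).factorial : ℚ)) *
              bernoulli ((∑ j, ν i j) + 1)) *
          (∏ i, ((k i).factorial : ℚ))⁻¹) := by
        rw [div_eq_mul_inv]; ring
    _ = (∑ ν ∈ (triSet_finite k).toFinset,
            ∏ i, (((k i).factorial : ℚ) / ∏ j, ((ν i j).factorial : ℚ)) *
              bernoulli ((∑ j, ν i j) + 1)) *
          (∏ i, ((k i).factorial : ℚ))⁻¹ := by rw [h1, one_mul]
    _ = ∑ ν ∈ (triSet_finite k).toFinset,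
          (∏ i, (((k i).factorial : ℚ) / ∏ j, ((ν i j).factorial : ℚ)) *
              bernoulli ((∑ j, ν i j) + 1)) *
            (∏ i, ((k i).factorial : ℚ))⁻¹ := Finset.sum_mul _ _ _
    _ = ∑ ν ∈ (triSet_finite k).toFinset, GG ν := by
        refine Finset.sum_congr rfl fun ν _ => ?_
        rw [← Finset.prod_inv_distrib, ← Finset.prod_mul_distrib, GG]
        refine Finset.prod_congr rfl fun i _ => ?_
        calc (((k i).factorial : ℚ) / ∏ j, ((ν i j).factorial : ℚ)) *
              bernoulli ((∑ j, ν i j) + 1) * (((k i).factorial : ℚ))⁻¹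
            = (((k i).factorial : ℚ) * (((k i).factorial : ℚ))⁻¹) *
              (bernoulli ((∑ j, ν i j) + 1) * (∏ j, ((ν i j).factorial : ℚ))⁻¹) := by
              rw [div_eq_mul_inv]; ring
          _ = bernoulli ((∑ j, ν i j) + 1) * (∏ j, ((ν i j).factorial : ℚ))⁻¹ := by
              rw [mul_inv_cancel₀ (hP i), one_mul]

lemma zetaFKMT_one (K : ℕ) :
    zetaFKMT (fun _ : Fin 1 => K) = (-1 : ℚ) ^ K * bernoulli (K + 1) := by
  have hset : {ν : Fin 1 → Fin 1 → ℕ |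
      (∀ i j : Fin 1, j < i → ν i j = 0) ∧
        ∀ j : Fin 1, (∑ i, ν i j) = (fun _ : Fin 1 => K) j}
      = {fun _ _ => K} := by
    ext ν
    simp only [Set.mem_setOf_eq, Set.mem_singleton_iff]
    constructor
    · rintro ⟨-, h2⟩
      funext i j
      have hi : i = 0 := Subsingleton.elim _ _
      have hj : j = 0 := Subsingleton.elim _ _
      subst hi; subst hj
      simpa [Fin.sum_univ_one] using h2 0
    · rintro rfl
      refine ⟨fun i j h => absurd h ?_, fun j => by simp [Fin.sum_univ_one]⟩
      have hij : i = j := Subsingleton.elim _ _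
      simp [hij]
  rw [zetaFKMT, hset, finsum_mem_singleton]
  have hK : ((K.factorial : ℚ)) ≠ 0 := Nat.cast_ne_zero.2 (Nat.factorial_ne_zero _)
  simp [Fin.sum_univ_one, Fin.prod_univ_one, div_self hK]

/-- Glue a first row `b` and a lower-right block `ν'` into an `(m+2)×(m+2)` matrix. -/
def glue (m : ℕ) (b : Fin (m + 2) → ℕ) (ν' : Fin (m + 1) → Fin (m + 1) → ℕ) :
    Fin (m + 2) → Fin (m + 2) → ℕ :=
  Fin.cases b fun i' => Fin.cases 0 fun j' => ν' i' j'

@[simp] lemma glue_zero (m : ℕ) (b : Fin (m + 2) → ℕ) (ν' : Fin (m + 1) → Fin (m + 1) → ℕ) :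
    glue m b ν' 0 = b := by simp [glue]

@[simp] lemma glue_succ_zero (m : ℕ) (b : Fin (m + 2) → ℕ)
    (ν' : Fin (m + 1) → Fin (m + 1) → ℕ) (i : Fin (m + 1)) :
    glue m b ν' i.succ 0 = 0 := by simp [glue]

@[simp] lemma glue_succ_succ (m : ℕ) (b : Fin (m + 2) → ℕ)
    (ν' : Fin (m + 1) → Fin (m + 1) → ℕ) (i j : Fin (m + 1)) :
    glue m b ν' i.succ j.succ = ν' i j := by simp [glue]

/-- For every `n = m + 2 ≥ 2`:
`Z_FKMT(t_1,…,t_n) = Z_FKMT(t_2,…,t_n) · Z_FKMT(t_1+⋯+t_n)`. -/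
theorem ZFKMT_recurrence (m : ℕ) :
    ZFKMT (m + 2) = ZFKMTtail m * ZFKMTdiag m := by
  apply MvPowerSeries.ext
  intro d
  rw [MvPowerSeries.coeff_mul]
  show ZFKMT (m + 2) d =
    ∑ p ∈ Finset.HasAntidiagonal.antidiagonal d, ZFKMTtail m p.1 * ZFKMTdiag m p.2
  -- abbreviations
  have hL : ZFKMT (m + 2) d =
      ∑ ν ∈ (triSet_finite (fun i : Fin (m + 2) => d i)).toFinset, GG ν :=
    lemA (fun i : Fin (m + 2) => d i)
  rw [hL]
  -- restrict the antidiagonal to pairs with vanishing first component at 0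
  have hne : ∀ p ∈ Finset.HasAntidiagonal.antidiagonal d,
      ZFKMTtail m p.1 * ZFKMTdiag m p.2 ≠ 0 → p.1 0 = 0 := by
    intro p _ h
    by_contra h0
    exact h (by simp [ZFKMTtail, h0])
  rw [← Finset.sum_filter_of_ne hne]
  -- expand each term as a sum over small triangular matrices
  have hterm : ∀ p ∈ (Finset.HasAntidiagonal.antidiagonal d).filter
      (fun p : (Fin (m + 2) →₀ ℕ) × (Fin (m + 2) →₀ ℕ) => p.1 0 = 0),
      ZFKMTtail m p.1 * ZFKMTdiag m p.2 =
        ∑ ν' ∈ (triSet_finite (fun i : Fin (m + 1) => p.1 i.succ)).toFinset,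
          GG ν' * (bernoulli ((∑ i, p.2 i) + 1) / ∏ i, ((p.2 i).factorial : ℚ)) := by
    intro p hp
    obtain ⟨hpd, hp0⟩ := Finset.mem_filter.1 hp
    have htail : ZFKMTtail m p.1 =
        ∑ ν' ∈ (triSet_finite (fun i : Fin (m + 1) => p.1 i.succ)).toFinset, GG ν' := by
      show (if p.1 0 = 0 then _ else _) = _
      rw [if_pos hp0]
      exact lemA (fun i : Fin (m + 1) => p.1 i.succ)
    have hdiag : ZFKMTdiag m p.2 =
        bernoulli ((∑ i, p.2 i) + 1) / ∏ i, ((p.2 i).factorial : ℚ) := by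
      show zetaFKMT _ * _ / _ = _
      rw [zetaFKMT_one]
      have h1 : ((-1 : ℚ) ^ (∑ i, p.2 i)) * ((-1 : ℚ) ^ (∑ i, p.2 i)) = 1 := by
        rw [← pow_add]; exact Even.neg_one_pow ⟨_, rfl⟩
      calc (-1 : ℚ) ^ (∑ i, p.2 i) * bernoulli ((∑ i, p.2 i) + 1) *
            (-1 : ℚ) ^ (∑ i, p.2 i) / ∏ i, ((p.2 i).factorial : ℚ)
          = ((-1 : ℚ) ^ (∑ i, p.2 i) * (-1 : ℚ) ^ (∑ i, p.2 i)) *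
            (bernoulli ((∑ i, p.2 i) + 1) / ∏ i, ((p.2 i).factorial : ℚ)) := by ring
        _ = bernoulli ((∑ i, p.2 i) + 1) / ∏ i, ((p.2 i).factorial : ℚ) := by
            rw [h1, one_mul]
    rw [htail, hdiag, Finset.sum_mul]
  rw [Finset.sum_congr rfl hterm]
  rw [← Finset.sum_sigma ((Finset.HasAntidiagonal.antidiagonal d).filter
      (fun p : (Fin (m + 2) →₀ ℕ) × (Fin (m + 2) →₀ ℕ) => p.1 0 = 0))
      (fun p => (triSet_finite (fun i : Fin (m + 1) => p.1 i.succ)).toFinset)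
      (fun x => GG x.2 * (bernoulli ((∑ i, x.1.2 i) + 1) / ∏ i, ((x.1.2 i).factorial : ℚ)))]
  -- now establish the bijection
  refine Finset.sum_nbij'
    (fun ν => (⟨(d - Finsupp.equivFunOnFinite.symm (ν 0), Finsupp.equivFunOnFinite.symm (ν 0)),
        fun i j => ν i.succ j.succ⟩ :
        Σ _ : (Fin (m + 2) →₀ ℕ) × (Fin (m + 2) →₀ ℕ), Fin (m + 1) → Fin (m + 1) → ℕ))
    (fun x => glue m (⇑x.1.2) x.2) ?_ ?_ ?_ ?_ ?_
  · -- forward membership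
    intro ν hν
    rw [Set.Finite.mem_toFinset] at hν
    obtain ⟨htri, hcol⟩ := hν
    replace hcol : ∀ j : Fin (m + 2), (∑ i, ν i j) = d j := hcol
    have hR : ∀ i, (Finsupp.equivFunOnFinite.symm (ν 0)) i = ν 0 i := fun _ => rfl
    have hcol0 : d 0 = ν 0 0 := by
      rw [← hcol 0, Fin.sum_univ_succ]
      have : ∀ i : Fin (m + 1), ν i.succ 0 = 0 :=
        fun i => htri i.succ 0 (Fin.succ_pos i)
      simp [this]
    have hle : Finsupp.equivFunOnFinite.symm (ν 0) ≤ d := by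
      rw [Finsupp.le_def]
      intro i
      rw [hR, ← hcol i]
      exact Finset.single_le_sum (f := fun i' => ν i' i) (fun _ _ => Nat.zero_le _)
        (Finset.mem_univ 0)
    refine Finset.mem_sigma.2 ⟨Finset.mem_filter.2 ⟨?_, ?_⟩, ?_⟩
    · rw [Finset.HasAntidiagonal.mem_antidiagonal]
      exact tsub_add_cancel_of_le hle
    · rw [Finsupp.tsub_apply, hR, ← hcol0]
      simp
    · rw [Set.Finite.mem_toFinset]
      refine ⟨fun i j h => htri i.succ j.succ (Fin.succ_lt_succ_iff.2 h), fun j => ?_⟩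
      show (∑ i : Fin (m + 1), ν i.succ j.succ) =
        (d - Finsupp.equivFunOnFinite.symm (ν 0)) j.succ
      have h2 : ν 0 j.succ + ∑ i : Fin (m + 1), ν i.succ j.succ = d j.succ := by
        have h3 := hcol j.succ
        rw [Fin.sum_univ_succ] at h3
        exact h3
      rw [Finsupp.tsub_apply, hR]
      omega
  · -- backward membership
    rintro ⟨⟨a, b⟩, ν'⟩ hx
    obtain ⟨hpf, hν'⟩ := Finset.mem_sigma.1 hx
    obtain ⟨hab, ha0⟩ := Finset.mem_filter.1 hpf
    rw [Finset.HasAntidiagonal.mem_antidiagonal] at hab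
    replace hab : a + b = d := hab
    replace ha0 : a 0 = 0 := ha0
    rw [Set.Finite.mem_toFinset] at hν'
    obtain ⟨htri', hcol'⟩ := hν'
    replace htri' : ∀ i j : Fin (m + 1), j < i → ν' i j = 0 := htri'
    replace hcol' : ∀ j : Fin (m + 1), (∑ i, ν' i j) = a j.succ := hcol'
    have habap : ∀ i, a i + b i = d i := by
      intro i
      rw [← hab]
      simp
    rw [Set.Finite.mem_toFinset]
    refine ⟨?_, ?_⟩
    · intro i j h
      refine Fin.cases ?_ (fun i' => ?_) i h
      · exact fun h' => absurd h' (Fin.not_lt_zero j)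
      · refine Fin.cases ?_ (fun j' => ?_) j
        · intro _; simp
        · intro h'
          have := htri' i' j' (by exact_mod_cast Fin.succ_lt_succ_iff.1 h')
          simp [this]
    · intro j
      show (∑ i, glue m (⇑b) ν' i j) = d j
      refine Fin.cases ?_ (fun j' => ?_) j
      · rw [Fin.sum_univ_succ]
        simp only [glue_zero, glue_succ_zero, Finset.sum_const_zero, add_zero]
        have := habap 0
        simp only [show a 0 = 0 from ha0, zero_add] at this
        exact this
      · rw [Fin.sum_univ_succ]
        simp only [glue_zero, glue_succ_succ]
        rw [hcol' j']
        have := habap j'.succ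
        omega
  · -- left inverse
    intro ν hν
    rw [Set.Finite.mem_toFinset] at hν
    obtain ⟨htri, -⟩ := hν
    show glue m (⇑(Finsupp.equivFunOnFinite.symm (ν 0))) (fun i j => ν i.succ j.succ) = ν
    funext i
    refine Fin.cases ?_ (fun i' => ?_) i
    · simp only [glue_zero]
      rfl
    · funext j
      refine Fin.cases ?_ (fun j' => ?_) j
      · rw [glue_succ_zero]
        exact (htri i'.succ 0 (Fin.succ_pos i')).symm
      · rw [glue_succ_succ]
  · -- right inverse
    rintro ⟨⟨a, b⟩, ν'⟩ hx
    obtain ⟨hpf, -⟩ := Finset.mem_sigma.1 hx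
    obtain ⟨hab, -⟩ := Finset.mem_filter.1 hpf
    rw [Finset.HasAntidiagonal.mem_antidiagonal] at hab
    have h1 : Finsupp.equivFunOnFinite.symm (glue m (⇑b) ν' 0) = b := by
      rw [glue_zero]
      exact Finsupp.equivFunOnFinite_symm_coe b
    have h2 : d - Finsupp.equivFunOnFinite.symm (glue m (⇑b) ν' 0) = a := by
      rw [h1]
      ext i
      rw [Finsupp.tsub_apply]
      have : a i + b i = d i := by rw [← hab]; simp
      omega
    have h3 : (fun i j => glue m (⇑b) ν' i.succ j.succ) = ν' := by
      funext i j
      rw [glue_succ_succ]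
    exact Sigma.ext (by rw [Prod.ext_iff]; exact ⟨h2, h1⟩) (heq_of_eq h3)
  · -- per-term equality
    intro ν hν
    rw [Set.Finite.mem_toFinset] at hν
    obtain ⟨htri, -⟩ := hν
    show GG ν = GG (fun i j => ν i.succ j.succ) *
      (bernoulli ((∑ i, (Finsupp.equivFunOnFinite.symm (ν 0)) i) + 1) /
        ∏ i, (((Finsupp.equivFunOnFinite.symm (ν 0)) i).factorial : ℚ))
    have hR : ⇑(Finsupp.equivFunOnFinite.symm (ν 0)) = ν 0 := rfl
    simp only [hR]
    rw [GG, Fin.prod_univ_succ]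
    have hrow : ∀ i' : Fin (m + 1),
        (∑ j, ν i'.succ j) = ∑ j : Fin (m + 1), ν i'.succ j.succ := by
      intro i'
      rw [Fin.sum_univ_succ, htri i'.succ 0 (Fin.succ_pos i'), zero_add]
    have hprod : ∀ i' : Fin (m + 1),
        (∏ j, ((ν i'.succ j).factorial : ℚ)) =
          ∏ j : Fin (m + 1), ((ν i'.succ j.succ).factorial : ℚ) := by
      intro i'
      rw [Fin.prod_univ_succ, htri i'.succ 0 (Fin.succ_pos i')]
      simp [Nat.factorial]
    have hGG : (∏ i' : Fin (m + 1),
        bernoulli ((∑ j, ν i'.succ j) + 1) * (∏ j, ((ν i'.succ j).factorial : ℚ))⁻¹) =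
        GG (fun i j => ν i.succ j.succ) := by
      rw [GG]
      refine Finset.prod_congr rfl fun i' _ => ?_
      rw [hrow i', hprod i']
    rw [hGG, div_eq_mul_inv]
    ring
end

section
/- For every n ≥ 1, the following identity of formal power series holds in ℚ[[t_1,…,t_n]]: Z_EMS(t_1,…,t_n) · ∏_{i=1}^n [s_i · (exp(s_i) − 1)] = ∏_{i=1}^n (s_i − (exp(s_i) − 1)), where s_i = t_i + t_{i+1} + ⋯ + t_n. (This is the denominator-cleared form of Z_EMS(t_1,…,t_n) = ∏_{i=1}^n (s_i − (e^{s_i}−1)) / (s_i(e^{s_i}−1)).) -/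
/-- Renormalized multiple zeta value `ζ_EMS(−k_1,…,−k_n)`. -/
noncomputable def zetaEMS {n : ℕ} (k : Fin n → ℕ) : ℚ :=
  (-1 : ℚ) ^ (∑ i, k i) *
    ∑ᶠ ν ∈ {ν : Fin n → Fin n → ℕ |
        (∀ i j : Fin n, j < i → ν i j = 0) ∧ ∀ j : Fin n, (∑ i, ν i j) = k j},
      ∏ i : Fin n,
        (((k i).factorial : ℚ) / ∏ j : Fin n, ((ν i j).factorial : ℚ)) *
          (bernoulli ((∑ j, ν i j) + 1) / (((∑ j, ν i j : ℕ) : ℚ) + 1))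

/-- Generating series `Z_EMS(t_1,…,t_n) = Σ_k ζ_EMS(−k_1,…,−k_n) ∏ (−t_i)^{k_i}/k_i!`. -/
noncomputable def ZEMS (n : ℕ) : MvPowerSeries (Fin n) ℚ :=
  fun d => zetaEMS (fun i => d i) * ∏ i, ((-1 : ℚ) ^ (d i) / ((d i).factorial : ℚ))

open Finset MvPowerSeries

namespace ZEMSAux
variable {n : ℕ}

noncomputable def Ssum (n : ℕ) (T : Finset (Fin n)) : MvPowerSeries (Fin n) ℚ :=
  ∑ j ∈ T, MvPowerSeries.X j

lemma prod_X_pow (T : Finset (Fin n)) (k : Fin n → ℕ) :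
    (∏ j ∈ T, (MvPowerSeries.X j : MvPowerSeries (Fin n) ℚ) ^ k j)
      = MvPowerSeries.monomial (∑ j ∈ T, Finsupp.single j (k j)) 1 := by
  classical
  induction T using Finset.cons_induction with
  | empty => simp
  | cons a s ha ih =>
      rw [Finset.prod_cons, Finset.sum_cons, ih, X_pow_eq, monomial_mul_monomial, one_mul]

lemma coeff_Ssum_pow (T : Finset (Fin n)) (d : Fin n →₀ ℕ) (m : ℕ) :
    MvPowerSeries.coeff d (Ssum n T ^ m)
      = if (⇑d) ∈ Finset.piAntidiag T m then (Nat.multinomial T ⇑d : ℚ) else 0 := by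
  classical
  rw [Ssum, Finset.sum_pow_eq_sum_piAntidiag, map_sum]
  have hterm : ∀ q ∈ Finset.piAntidiag T m,
      MvPowerSeries.coeff d
        ((Nat.multinomial T q : MvPowerSeries (Fin n) ℚ) * ∏ j ∈ T, MvPowerSeries.X j ^ q j)
        = if ⇑d = q then (Nat.multinomial T q : ℚ) else 0 := by
    intro q hq
    rw [Finset.mem_piAntidiag] at hq
    have hsupp : (∑ j ∈ T, Finsupp.single j (q j)) = Finsupp.equivFunOnFinite.symm q := by
      ext i
      rw [Finset.sum_apply']
      simp only [Finsupp.single_apply, Finsupp.coe_equivFunOnFinite_symm]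
      rw [Finset.sum_ite_eq' T i q]
      by_cases hiT : i ∈ T
      · rw [if_pos hiT]
      · rw [if_neg hiT]
        by_contra hne
        exact hiT (hq.2 i (fun h => hne h.symm))
    rw [← map_natCast (MvPowerSeries.C (σ := Fin n) (R := ℚ)), coeff_C_mul, prod_X_pow, hsupp,
      MvPowerSeries.coeff_monomial, mul_ite, mul_one, mul_zero]
    congr 1
    rw [eq_iff_iff, Equiv.eq_symm_apply]
    exact Iff.rfl
  rw [Finset.sum_congr rfl hterm, Finset.sum_ite_eq (Finset.piAntidiag T m) (⇑d) (fun q => (Nat.multinomial T q : ℚ))]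


lemma sum_eq_of_supp (T : Finset (Fin n)) (d : Fin n → ℕ) (h : ∀ i, d i ≠ 0 → i ∈ T) :
    ∑ i ∈ T, d i = ∑ i, d i :=
  Finset.sum_subset (Finset.subset_univ T) (fun x _ hx => by
    by_contra hne; exact hx (h x hne))

lemma coeff_Ssum_pow_ne (T : Finset (Fin n)) (d : Fin n →₀ ℕ) {m : ℕ}
    (h : (∑ i, d i) ≠ m) : MvPowerSeries.coeff d (Ssum n T ^ m) = 0 := by
  classical
  rw [coeff_Ssum_pow, if_neg]
  intro hmem
  rw [Finset.mem_piAntidiag] at hmem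
  exact h (by rw [← sum_eq_of_supp T (⇑d) hmem.2, hmem.1])

noncomputable def ev (T : Finset (Fin n)) (f : PowerSeries ℚ) : MvPowerSeries (Fin n) ℚ :=
  fun d => PowerSeries.coeff (∑ i, d i) f * MvPowerSeries.coeff d (Ssum n T ^ (∑ i, d i))

lemma coeff_ev (T : Finset (Fin n)) (f : PowerSeries ℚ) (d : Fin n →₀ ℕ) :
    MvPowerSeries.coeff d (ev T f)
      = PowerSeries.coeff (∑ i, d i) f
          * MvPowerSeries.coeff d (Ssum n T ^ (∑ i, d i)) := rfl

lemma sum_add_apply (p : (Fin n →₀ ℕ) × (Fin n →₀ ℕ)) (d : Fin n →₀ ℕ)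
    (h : p.1 + p.2 = d) : (∑ i, p.1 i) + (∑ i, p.2 i) = ∑ i, d i := by
  rw [← h]; simp [Finsupp.add_apply, Finset.sum_add_distrib]

lemma ev_mul (T : Finset (Fin n)) (f g : PowerSeries ℚ) :
    ev T (f * g) = ev T f * ev T g := by
  classical
  ext d
  rw [MvPowerSeries.coeff_mul]
  have key : ∀ p ∈ Finset.HasAntidiagonal.antidiagonal d,
      MvPowerSeries.coeff p.1 (ev T f) * MvPowerSeries.coeff p.2 (ev T g)
        = ∑ ab ∈ Finset.HasAntidiagonal.antidiagonal (∑ i, d i),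
            PowerSeries.coeff ab.1 f * PowerSeries.coeff ab.2 g *
              (MvPowerSeries.coeff p.1 (Ssum n T ^ ab.1) *
                MvPowerSeries.coeff p.2 (Ssum n T ^ ab.2)) := by
    intro p hp
    rw [Finset.HasAntidiagonal.mem_antidiagonal] at hp
    have hsum : (∑ i, p.1 i) + (∑ i, p.2 i) = ∑ i, d i := sum_add_apply p d hp
    rw [coeff_ev, coeff_ev]
    rw [Finset.sum_eq_single ((∑ i, p.1 i), (∑ i, p.2 i))]
    · ring
    · rintro ⟨a, b⟩ hab hne
      rcases eq_or_ne (∑ i, p.1 i) a with ha | ha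
      · have hb : (∑ i, p.2 i) ≠ b := by
          intro hb; exact hne (by rw [← ha, ← hb])
        rw [coeff_Ssum_pow_ne T p.2 hb]
        ring
      · rw [coeff_Ssum_pow_ne T p.1 ha]
        ring
    · intro h; exact absurd (Finset.HasAntidiagonal.mem_antidiagonal.2 hsum) h
  rw [Finset.sum_congr rfl key, Finset.sum_comm]
  rw [coeff_ev, PowerSeries.coeff_mul, Finset.sum_mul]
  refine Finset.sum_congr rfl ?_
  rintro ⟨a, b⟩ hab
  rw [Finset.HasAntidiagonal.mem_antidiagonal] at hab
  rw [← Finset.mul_sum]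
  congr 1
  rw [← MvPowerSeries.coeff_mul, ← pow_add, hab]

lemma ev_sub (T : Finset (Fin n)) (f g : PowerSeries ℚ) :
    ev T (f - g) = ev T f - ev T g := by
  ext d
  rw [map_sub, coeff_ev, coeff_ev, coeff_ev, map_sub, sub_mul]

lemma ev_one (T : Finset (Fin n)) : ev T (1 : PowerSeries ℚ) = 1 := by
  ext d
  rw [coeff_ev]
  rcases eq_or_ne d 0 with rfl | hd
  · simp
  · have h : (∑ i, d i) ≠ 0 := by
      intro h0
      exact hd (Finsupp.ext fun i => Finset.sum_eq_zero_iff.mp h0 i (Finset.mem_univ i))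
    rw [PowerSeries.coeff_one, if_neg h, zero_mul, MvPowerSeries.coeff_one, if_neg hd]

lemma ev_X (T : Finset (Fin n)) : ev T PowerSeries.X = Ssum n T := by
  classical
  ext d
  rw [coeff_ev, PowerSeries.coeff_X]
  rcases eq_or_ne (∑ i, d i) 1 with h1 | h1
  · rw [if_pos h1, h1, pow_one, one_mul]
  · rw [if_neg h1, zero_mul, Ssum, map_sum]
    refine (Finset.sum_eq_zero fun j hj => ?_).symm
    rw [MvPowerSeries.coeff_X, if_neg]
    intro hd
    apply h1
    rw [hd]
    simp [Finsupp.single_apply]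

lemma ev_exp (T : Finset (Fin n)) : ev T (PowerSeries.exp ℚ) = expPS (Ssum n T) := by
  ext d
  rw [coeff_ev, PowerSeries.coeff_exp]
  have hc : MvPowerSeries.coeff d (expPS (Ssum n T))
      = ∑ m ∈ Finset.range ((∑ i, d i) + 1),
          MvPowerSeries.coeff d (Ssum n T ^ m) / (m.factorial : ℚ) := rfl
  rw [hc, Finset.sum_eq_single (∑ i, d i)]
  · simp [div_eq_mul_inv, mul_comm]
  · intro m hm hne
    rw [coeff_Ssum_pow_ne T d (Ne.symm hne), zero_div]
  · intro h; exact absurd (Finset.mem_range.2 (Nat.lt_succ_self _)) h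


noncomputable def bPS : PowerSeries ℚ :=
  PowerSeries.mk fun m => bernoulli (m + 1) / ((m + 1).factorial : ℚ)

lemma X_mul_bPS : PowerSeries.X * bPS = bernoulliPowerSeries ℚ - 1 := by
  ext m
  cases m with
  | zero =>
      simp [bernoulliPowerSeries, PowerSeries.coeff_zero_eq_constantCoeff, map_mul]
  | succ m =>
      rw [PowerSeries.coeff_succ_X_mul, map_sub, PowerSeries.coeff_one, if_neg (Nat.succ_ne_zero m)]
      simp [bPS, bernoulliPowerSeries]

lemma key1 : bPS * (PowerSeries.X * (PowerSeries.exp ℚ - 1))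
    = PowerSeries.X - (PowerSeries.exp ℚ - 1) := by
  have h := bernoulliPowerSeries_mul_exp_sub_one ℚ
  calc bPS * (PowerSeries.X * (PowerSeries.exp ℚ - 1))
      = (PowerSeries.X * bPS) * (PowerSeries.exp ℚ - 1) := by ring
    _ = (bernoulliPowerSeries ℚ - 1) * (PowerSeries.exp ℚ - 1) := by rw [X_mul_bPS]
    _ = bernoulliPowerSeries ℚ * (PowerSeries.exp ℚ - 1) - (PowerSeries.exp ℚ - 1) := by ring
    _ = PowerSeries.X - (PowerSeries.exp ℚ - 1) := by rw [h]

lemma factor (T : Finset (Fin n)) :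
    ev T bPS * (Ssum n T * (expPS (Ssum n T) - 1))
      = Ssum n T - (expPS (Ssum n T) - 1) := by
  have h := congrArg (ev T) key1
  simp only [ev_mul, ev_sub, ev_one, ev_X, ev_exp] at h
  exact h


lemma coeff_ev_bPS (T : Finset (Fin n)) (e : Fin n →₀ ℕ) (hsupp : ∀ j, e j ≠ 0 → j ∈ T) :
    MvPowerSeries.coeff e (ev T bPS)
      = bernoulli ((∑ j, e j) + 1) / (((∑ j, e j) + 1).factorial : ℚ)
          * (Nat.multinomial T ⇑e : ℚ) := by
  classical
  rw [coeff_ev, coeff_Ssum_pow, if_pos, bPS, PowerSeries.coeff_mk]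
  rw [Finset.mem_piAntidiag]
  exact ⟨sum_eq_of_supp T (⇑e) hsupp, hsupp⟩

lemma scalar_id (K r : ℕ) (P M B : ℚ) (hP : P ≠ 0) (hM : M * P = (r.factorial : ℚ)) :
    B / (((r + 1).factorial : ℚ)) * M
      = (-1:ℚ)^K * ((K.factorial : ℚ) / P * (B / ((r:ℚ) + 1))) * ((-1:ℚ)^K / (K.factorial : ℚ)) := by
  have h1 : ((-1:ℚ))^K * ((-1:ℚ))^K = 1 := by rw [← mul_pow]; norm_num
  have hK : (K.factorial : ℚ) ≠ 0 := Nat.cast_ne_zero.2 (Nat.factorial_ne_zero K)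
  have hr : ((r:ℚ) + 1) ≠ 0 := by positivity
  have hfac : (((r+1).factorial : ℚ)) = ((r:ℚ) + 1) * (r.factorial : ℚ) := by
    rw [Nat.factorial_succ]; push_cast; ring
  have hrfac : (r.factorial : ℚ) ≠ 0 := Nat.cast_ne_zero.2 (Nat.factorial_ne_zero r)
  have hMP : M = (r.factorial : ℚ) / P := (eq_div_iff hP).2 hM
  generalize hcc : ((-1:ℚ))^K = c at h1 ⊢
  rw [hMP, hfac]
  field_simp
  linear_combination (-B) * h1

lemma ZEMS_eq_prod (n : ℕ) : ZEMS n = ∏ i : Fin n, ev (Finset.Ici i) bPS := by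
  classical
  ext d
  rw [MvPowerSeries.coeff_prod]
  have hL : MvPowerSeries.coeff d (ZEMS n)
      = zetaEMS (fun i => d i) * ∏ i, ((-1 : ℚ) ^ (d i) / ((d i).factorial : ℚ)) := rfl
  rw [hL, zetaEMS]
  set k : Fin n → ℕ := fun i => d i with hk
  set SetS : Set (Fin n → Fin n → ℕ) := {ν : Fin n → Fin n → ℕ |
      (∀ i j : Fin n, j < i → ν i j = 0) ∧ ∀ j : Fin n, (∑ i, ν i j) = k j} with hSetS
  have hfin : SetS.Finite := by
    apply Set.Finite.subset
      (Set.Finite.pi (fun i : Fin n => Set.Finite.pi (fun j : Fin n => Set.finite_Iic (k j))))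
    intro ν hν
    simp only [Set.mem_pi, Set.mem_univ, forall_true_left, Set.mem_Iic]
    intro i j
    have := hν.2 j
    calc ν i j ≤ ∑ i', ν i' j :=
          Finset.single_le_sum (f := fun i' => ν i' j) (fun _ _ => Nat.zero_le _) (Finset.mem_univ i)
      _ = k j := hν.2 j
  rw [finsum_mem_eq_finite_toFinset_sum _ hfin, Finset.mul_sum, Finset.sum_mul]
  -- restrict RHS to triangular l
  have hzero : ∀ l ∈ Finset.finsuppAntidiag (Finset.univ : Finset (Fin n)) d,
      (∏ i, MvPowerSeries.coeff (l i) (ev (Finset.Ici i) bPS)) ≠ 0 →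
        (∀ i j : Fin n, j < i → l i j = 0) := by
    intro l _ hne i j hji
    by_contra hlij
    apply hne
    apply Finset.prod_eq_zero (Finset.mem_univ i)
    rw [coeff_ev, coeff_Ssum_pow, if_neg, mul_zero]
    rw [Finset.mem_piAntidiag]
    rintro ⟨-, h2⟩
    exact absurd (Finset.mem_Ici.mp (h2 j hlij)) (not_le.mpr hji)
  rw [← Finset.sum_filter_of_ne hzero]
  refine (Finset.sum_nbij' (fun l : Fin n →₀ (Fin n →₀ ℕ) => fun i j => l i j)
    (fun ν => Finsupp.equivFunOnFinite.symm fun i => Finsupp.equivFunOnFinite.symm (ν i))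
    ?_ ?_ ?_ ?_ ?_).symm
  · -- maps filter → toFinset
    intro l hl
    rw [Finset.mem_filter, Finset.mem_finsuppAntidiag] at hl
    rw [Set.Finite.mem_toFinset]
    refine ⟨hl.2, fun j => ?_⟩
    have := congrArg (fun (x : Fin n →₀ ℕ) => x j) hl.1.1
    simpa [Finset.sum_apply'] using this
  · -- maps toFinset → filter
    intro ν hν
    rw [Set.Finite.mem_toFinset] at hν
    rw [Finset.mem_filter, Finset.mem_finsuppAntidiag]
    refine ⟨⟨?_, Finset.subset_univ _⟩, fun i j h => ?_⟩
    · ext j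
      rw [Finset.sum_apply']
      simpa using hν.2 j
    · simpa using hν.1 i j h
  · intro l hl
    ext i j
    simp [Finsupp.coe_equivFunOnFinite_symm]
  · intro ν hν
    funext i j
    simp [Finsupp.coe_equivFunOnFinite_symm]
  · -- term equality
    intro l hl
    rw [Finset.mem_filter, Finset.mem_finsuppAntidiag] at hl
    obtain ⟨⟨hsum, -⟩, htri⟩ := hl
    rw [← Finset.prod_pow_eq_pow_sum, ← Finset.prod_mul_distrib, ← Finset.prod_mul_distrib]
    refine Finset.prod_congr rfl fun i _ => ?_
    have hsupp : ∀ j, l i j ≠ 0 → j ∈ Finset.Ici i := by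
      intro j hj
      rw [Finset.mem_Ici]
      by_contra hij
      exact hj (htri i j (not_le.mp hij))
    rw [coeff_ev_bPS _ _ hsupp]
    have hspec := Nat.multinomial_spec (Finset.Ici i) ⇑(l i)
    have hprodeq : (∏ j ∈ Finset.Ici i, ((l i) j).factorial) = ∏ j, ((l i) j).factorial :=
      Finset.prod_subset (Finset.subset_univ _) (fun x _ hx => by
        rw [htri i x (not_le.mp (fun h => hx (Finset.mem_Ici.mpr h))), Nat.factorial_zero])
    have hsumeq : (∑ j ∈ Finset.Ici i, (l i) j) = ∑ j, (l i) j :=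
      sum_eq_of_supp _ _ hsupp
    have hM : (Nat.multinomial (Finset.Ici i) ⇑(l i) : ℚ) * (∏ j, (((l i) j).factorial : ℚ))
        = ((∑ j, (l i) j).factorial : ℚ) := by
      rw [← hsumeq, ← Nat.cast_prod, ← hprodeq, ← Nat.cast_mul, mul_comm, hspec]
    have hP : (∏ j, (((l i) j).factorial : ℚ)) ≠ 0 := by
      apply Finset.prod_ne_zero_iff.mpr
      intro j _
      exact Nat.cast_ne_zero.2 (Nat.factorial_ne_zero _)
    exact scalar_id (k i) (∑ j, (l i) j) _ _ _ hP hM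

end ZEMSAux

/-- `Z_EMS(t_1,…,t_n) ∏_i [s_i (e^{s_i} − 1)] = ∏_i (s_i − (e^{s_i} − 1))`,
the denominator-cleared form of `Z_EMS = ∏ (s_i − (e^{s_i}−1))/(s_i(e^{s_i}−1))`. -/
theorem ZEMS_closed_form (n : ℕ) (hn : 1 ≤ n) :
    ZEMS n * ∏ i : Fin n, (sVar n i * (expPS (sVar n i) - 1)) =
      ∏ i : Fin n, (sVar n i - (expPS (sVar n i) - 1)) := by
  rw [ZEMSAux.ZEMS_eq_prod, ← Finset.prod_mul_distrib]
  exact Finset.prod_congr rfl fun i _ => ZEMSAux.factor (Finset.Ici i)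
end

section
/- (Shuffle relations among renormalized values in depth ≤ 2.) (i) For all nonnegative integers a, b with b ≥ 1: ζ_EMS(−a) · ζ_EMS(−b) = Σ_{k=0}^{a} (−1)^k C(a,k) · ζ_EMS(−(b+k), −(a−k)). (ii) For every nonnegative integer a: ζ_EMS(−a) · ζ_EMS(0) = ζ_EMS(−a, 0). Here C(a,k) denotes the binomial coefficient. -/
noncomputable def bf (m : ℕ) : ℚ := bernoulli (m+1) / ((m : ℚ) + 1)

lemma zeta1 (a : ℕ) : zetaEMS (fun _ : Fin 1 => a) = (-1 : ℚ)^a * bf a := by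
  have hset : {ν : Fin 1 → Fin 1 → ℕ |
        (∀ i j : Fin 1, j < i → ν i j = 0) ∧ ∀ j : Fin 1, (∑ i, ν i j) = a}
      = {fun _ _ => a} := by
    ext ν
    simp only [Set.mem_setOf_eq, Set.mem_singleton_iff, Fin.sum_univ_one]
    constructor
    · rintro ⟨-, h2⟩
      funext i j
      have hi : i = 0 := Subsingleton.elim _ _
      have hj : j = 0 := Subsingleton.elim _ _
      rw [hi, hj]; exact h2 0
    · rintro rfl
      exact ⟨fun i j h => absurd h (by rw [Subsingleton.elim j i]; exact lt_irrefl _), fun j => rfl⟩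
  rw [zetaEMS, hset, finsum_mem_singleton]
  simp [Fin.sum_univ_one, Fin.prod_univ_one, bf,
    div_self (by exact_mod_cast a.factorial_ne_zero : ((a.factorial : ℚ) ≠ 0))]

def Fmat (k1 k2 j : ℕ) : Fin 2 → Fin 2 → ℕ := ![![k1, j], ![0, k2 - j]]

lemma zeta2 (k1 k2 : ℕ) : zetaEMS ![k1, k2] =
    (-1 : ℚ)^(k1+k2) * ∑ j ∈ Finset.range (k2+1),
      (k2.choose j : ℚ) * bf (k1+j) * bf (k2-j) := by
  have hset : {ν : Fin 2 → Fin 2 → ℕ |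
        (∀ i j : Fin 2, j < i → ν i j = 0) ∧ ∀ j : Fin 2, (∑ i, ν i j) = ![k1,k2] j}
      = ↑((Finset.range (k2+1)).image (Fmat k1 k2)) := by
    ext ν
    simp only [Set.mem_setOf_eq, Finset.coe_image, Set.mem_image, Finset.mem_coe,
      Finset.mem_range]
    constructor
    · rintro ⟨h1, h2⟩
      have h10 : ν 1 0 = 0 := h1 1 0 (by norm_num)
      have e0 := h2 0
      have e1 := h2 1
      rw [Fin.sum_univ_two] at e0 e1
      simp only [Matrix.cons_val_zero, Matrix.cons_val_one, Matrix.head_cons] at e0 e1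
      refine ⟨ν 0 1, by omega, ?_⟩
      funext i j
      fin_cases i <;> fin_cases j <;>
        simp [Fmat] <;> omega
    · rintro ⟨j, hj, rfl⟩
      constructor
      · intro i j' h
        fin_cases i <;> fin_cases j' <;> simp_all [Fmat] <;> omega
      · intro j'
        fin_cases j' <;> simp [Fmat, Fin.sum_univ_two] <;> omega
  rw [zetaEMS, hset, finsum_mem_coe_finset]
  rw [Finset.sum_image (by
    intro x hx y hy h
    have := congrFun (congrFun h 0) 1
    simpa [Fmat] using this)]
  have hsum : (∑ i, ![k1,k2] i) = k1 + k2 := by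
    rw [Fin.sum_univ_two]; simp
  rw [hsum]
  congr 1
  refine Finset.sum_congr rfl fun j hj => ?_
  have hjk : j ≤ k2 := by simp at hj; omega
  rw [Fin.prod_univ_two]
  simp only [Fmat, Matrix.cons_val_zero, Matrix.cons_val_one, Matrix.head_cons,
    Fin.sum_univ_two, Fin.prod_univ_two]
  have h1 : (k1.factorial : ℚ) ≠ 0 := by exact_mod_cast k1.factorial_ne_zero
  have h2 : (j.factorial : ℚ) ≠ 0 := by exact_mod_cast j.factorial_ne_zero
  have h3 : ((k2-j).factorial : ℚ) ≠ 0 := by exact_mod_cast (k2-j).factorial_ne_zero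
  have h4 : ((k1+j : ℕ) : ℚ) + 1 ≠ 0 := by positivity
  have h5 : ((k2-j : ℕ) : ℚ) + 1 ≠ 0 := by positivity
  rw [Nat.cast_choose ℚ hjk]
  simp only [Nat.factorial_zero, Nat.cast_one, one_mul, bf,
    div_mul_eq_div_div, div_self h1]
  field_simp
  ring

lemma alt_sum (s : ℕ) :
    ∑ k ∈ Finset.range (s+1), (-1 : ℚ)^k * (s.choose k : ℚ) =
      if s = 0 then 1 else 0 := by
  have h := Int.alternating_sum_range_choose (n := s)
  exact_mod_cast h

lemma reindex (n : ℕ) (φ : ℕ → ℕ → ℚ) :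
    ∑ k ∈ Finset.range (n+1), ∑ j ∈ Finset.range (n-k+1), φ k (k+j)
    = ∑ s ∈ Finset.range (n+1), ∑ k ∈ Finset.range (s+1), φ k s := by
  rw [Finset.sum_sigma', Finset.sum_sigma']
  refine Finset.sum_nbij' (fun p => ⟨p.1+p.2, p.1⟩) (fun p => ⟨p.2, p.1-p.2⟩)
    ?_ ?_ ?_ ?_ ?_
  · rintro ⟨x, y⟩ h
    simp only [Finset.mem_sigma, Finset.mem_range] at h ⊢
    omega
  · rintro ⟨x, y⟩ h
    simp only [Finset.mem_sigma, Finset.mem_range] at h ⊢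
    omega
  · rintro ⟨x, y⟩ h
    simp only [Finset.mem_sigma, Finset.mem_range] at h
    have e : x + y - x = y := by omega
    simp [e]
  · rintro ⟨x, y⟩ h
    simp only [Finset.mem_sigma, Finset.mem_range] at h
    have e : y + (x - y) = x := by omega
    simp [e]
  · rintro ⟨x, y⟩ h
    rfl

lemma key (a b : ℕ) :
    ∑ k ∈ Finset.range (a+1), (-1 : ℚ)^k * (a.choose k : ℚ) *
      ∑ j ∈ Finset.range (a-k+1), ((a-k).choose j : ℚ) * bf (b+k+j) * bf (a-k-j)
    = bf a * bf b := by
  have step1 : ∀ k ∈ Finset.range (a+1),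
      (-1 : ℚ)^k * (a.choose k : ℚ) *
        ∑ j ∈ Finset.range (a-k+1), ((a-k).choose j : ℚ) * bf (b+k+j) * bf (a-k-j)
      = ∑ j ∈ Finset.range (a-k+1),
          (fun k s => (-1 : ℚ)^k * (a.choose k : ℚ) * ((a-k).choose (s-k) : ℚ)
            * bf (b+s) * bf (a-s)) k (k+j) := by
    intro k hk
    rw [Finset.mul_sum]
    refine Finset.sum_congr rfl fun j hj => ?_
    simp only
    have e1 : b + k + j = b + (k + j) := by omega
    have e2 : a - k - j = a - (k + j) := by omega
    have e3 : k + j - k = j := by omega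
    rw [e1, e2, e3]; ring
  rw [Finset.sum_congr rfl step1]
  rw [reindex a (fun k s => (-1 : ℚ)^k * (a.choose k : ℚ) * ((a-k).choose (s-k) : ℚ)
      * bf (b+s) * bf (a-s))]
  have step2 : ∀ s ∈ Finset.range (a+1),
      (∑ k ∈ Finset.range (s+1), (fun k s => (-1 : ℚ)^k * (a.choose k : ℚ)
          * ((a-k).choose (s-k) : ℚ) * bf (b+s) * bf (a-s)) k s)
      = if s = 0 then bf a * bf b else 0 := by
    intro s hs
    simp only [Finset.mem_range] at hs
    have hsa : s ≤ a := by omega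
    have inner : ∀ k ∈ Finset.range (s+1),
        (-1 : ℚ)^k * (a.choose k : ℚ) * ((a-k).choose (s-k) : ℚ) * bf (b+s) * bf (a-s)
        = ((-1 : ℚ)^k * (s.choose k : ℚ)) * ((a.choose s : ℚ) * bf (b+s) * bf (a-s)) := by
      intro k hk
      simp only [Finset.mem_range] at hk
      have hks : k ≤ s := by omega
      have hcc : a.choose s * s.choose k = a.choose k * (a-k).choose (s-k) :=
        Nat.choose_mul hks
      have hq : ((a.choose s * s.choose k : ℕ) : ℚ)
          = ((a.choose k * (a-k).choose (s-k) : ℕ) : ℚ) := by rw [hcc]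
      push_cast at hq
      linear_combination (-((-1 : ℚ)^k * bf (b+s) * bf (a-s))) * hq
    simp only
    rw [Finset.sum_congr rfl inner, ← Finset.sum_mul, alt_sum]
    split
    · rename_i h; subst h; simp [mul_comm]
    · simp
  rw [Finset.sum_congr rfl step2, Finset.sum_ite_eq' (Finset.range (a+1)) 0
    (fun _ => bf a * bf b)]
  simp

/-- Shuffle relations among renormalized values in depth ≤ 2:
(i) for `b ≥ 1`, `ζ_EMS(−a)·ζ_EMS(−b) = Σ_{k=0}^a (−1)^k C(a,k) ζ_EMS(−(b+k),−(a−k))`;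
(ii) `ζ_EMS(−a)·ζ_EMS(0) = ζ_EMS(−a,0)`. -/
theorem zetaEMS_shuffle_depth_two :
    (∀ a b : ℕ, 1 ≤ b →
      zetaEMS (fun _ : Fin 1 => a) * zetaEMS (fun _ : Fin 1 => b) =
        ∑ k ∈ Finset.range (a + 1),
          (-1 : ℚ) ^ k * (a.choose k : ℚ) * zetaEMS ![b + k, a - k]) ∧
    (∀ a : ℕ,
      zetaEMS (fun _ : Fin 1 => a) * zetaEMS (fun _ : Fin 1 => 0) =
        zetaEMS ![a, 0]) := by
  constructor
  · intro a b _
    rw [zeta1, zeta1]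
    have hterm : ∀ k ∈ Finset.range (a+1),
        (-1 : ℚ)^k * (a.choose k : ℚ) * zetaEMS ![b+k, a-k]
        = (-1 : ℚ)^(a+b) * ((-1 : ℚ)^k * (a.choose k : ℚ) *
            ∑ j ∈ Finset.range (a-k+1), ((a-k).choose j : ℚ) * bf (b+k+j) * bf (a-k-j)) := by
      intro k hk
      simp only [Finset.mem_range] at hk
      rw [zeta2]
      have h1 : b + k + (a - k) = a + b := by omega
      rw [h1]
      ring
    rw [Finset.sum_congr rfl hterm, ← Finset.mul_sum, key a b, pow_add]
    ring
  · intro a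
    rw [zeta1, zeta1, zeta2]
    rw [Finset.sum_range_one]
    norm_num
    ring
end

section
/- (Euler's shuffle decomposition.) For all integers a, b ≥ 2: ζ(a)·ζ(b) = Σ_{k=0}^{a−1} C(b−1+k, k) · ζ(a−k, b+k) + Σ_{k=0}^{b−1} C(a−1+k, k) · ζ(b−k, a+k), where all series involved converge (each double zeta value appearing has last entry ≥ 2) and C(m,k) denotes the binomial coefficient. -/
/-- `ζ(a) = Σ_{m=1}^∞ 1/m^a` (a convergent series of reals for `a ≥ 2`). -/
noncomputable def zetaVal (a : ℕ) : ℝ := ∑' m : ℕ+, 1 / (m : ℝ) ^ a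

/-- Double zeta value `ζ(a,b) = Σ_{0<m_1<m_2} 1/(m_1^a m_2^b)`
(a convergent series of reals for `b ≥ 2`, `a ≥ 1`). -/
noncomputable def doubleZetaVal (a b : ℕ) : ℝ :=
  ∑' p : ℕ+ × ℕ+, if p.1 < p.2 then 1 / ((p.1 : ℝ) ^ a * (p.2 : ℝ) ^ b) else 0

open Finset

/-!
Partial fractions: from `1/(mn) = 1/(m+n) · (1/m + 1/n)`, induction on `a + b` expands
`1/(m^a n^b)` into
`Σ_{k<a} C(b-1+k,k) / (m^(a-k) (m+n)^(b+k)) + Σ_{k<b} C(a-1+k,k) / (n^(b-k) (m+n)^(a+k))`.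
Summing over `m, n ≥ 1` gives `ζ(a)ζ(b)` on the left, and the substitution `(m, n) ↦ (m, m+n)`
(resp. `(n, m+n)`) turns each sum on the right into a double zeta value.
-/

section Algebra

variable {R : Type*} [CommSemiring R]

/-- `shuffleSum u w (a - 1) (b - 1) = Σ_{k<a} C(b-1+k,k) u^(a-k) w^(b+k)`; the shift by one keeps
`b - 1` out of the binomial coefficient, where natural subtraction would truncate. -/
def shuffleSum (u w : R) (A B : ℕ) : R :=
  ∑ k ∈ range (A + 1), ((B + k).choose k : R) * u ^ (A + 1 - k) * w ^ (B + 1 + k)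

lemma shuffleSum_zero_left (u w : R) (B : ℕ) : shuffleSum u w 0 B = u * w ^ (B + 1) := by
  simp [shuffleSum]

lemma shuffleSum_succ_zero (u w : R) (A : ℕ) :
    shuffleSum u w (A + 1) 0 = u * (shuffleSum u w A 0 + w ^ (A + 2)) := by
  rw [shuffleSum, sum_range_succ, shuffleSum, mul_add, mul_sum]
  congr 1
  · refine sum_congr rfl fun k hk => ?_
    rw [Nat.sub_add_comm (mem_range.1 hk).le, pow_succ]
    ring
  · simp [add_comm 1]

lemma shuffleSum_succ_succ (u w : R) (A B : ℕ) :
    shuffleSum u w (A + 1) (B + 1) =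
      w * (shuffleSum u w (A + 1) B + shuffleSum u w A (B + 1)) := by
  unfold shuffleSum
  calc _ = ∑ k ∈ range (A + 1), ((B + 1 + (k + 1)).choose (k + 1) : R)
          * u ^ (A + 1 + 1 - (k + 1)) * w ^ (B + 1 + 1 + (k + 1)) + u ^ (A + 2) * w ^ (B + 2) := by
        rw [sum_range_succ']; simp
    _ = ∑ k ∈ range (A + 1), (w * (((B + (k + 1)).choose (k + 1) : R)
          * u ^ (A + 1 + 1 - (k + 1)) * w ^ (B + 1 + (k + 1)))
          + w * (((B + 1 + k).choose k : R) * u ^ (A + 1 - k) * w ^ (B + 1 + 1 + k)))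
          + u ^ (A + 2) * w ^ (B + 2) := by
        congr 1
        refine sum_congr rfl fun k _ => ?_
        rw [show B + 1 + (k + 1) = B + 1 + k + 1 by ring, Nat.choose_succ_succ',
          show B + (k + 1) = B + 1 + k by ring, Nat.add_sub_add_right]
        push_cast
        ring
    _ = _ := by
        rw [sum_add_distrib, ← mul_sum, ← mul_sum, sum_range_succ' _ (A + 1)]
        simp only [Nat.reduceSubDiff, add_zero, Nat.choose_zero_right, Nat.cast_one, tsub_zero,
          one_mul]
        ring

variable {u v w : R}

lemma pow_succ_mul_eq_shuffleSum_add (h : u * v = w * (u + v)) (A : ℕ) :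
    u ^ (A + 1) * v = shuffleSum u w A 0 + shuffleSum v w 0 A := by
  induction A with
  | zero =>
    rw [shuffleSum_zero_left, shuffleSum_zero_left, zero_add, pow_one, pow_one, h]
    ring
  | succ A ih =>
    rw [shuffleSum_zero_left] at ih ⊢
    calc u ^ (A + 2) * v = u * (u ^ (A + 1) * v) := by ring
      _ = u * shuffleSum u w A 0 + u * v * w ^ (A + 1) := by rw [ih]; ring
      _ = _ := by rw [h, shuffleSum_succ_zero]; ring

lemma pow_mul_pow_eq_shuffleSum_add (h : u * v = w * (u + v)) (A B : ℕ) :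
    u ^ (A + 1) * v ^ (B + 1) = shuffleSum u w A B + shuffleSum v w B A := by
  induction A generalizing B with
  | zero =>
    rw [zero_add, pow_one, mul_comm, add_comm (shuffleSum u w 0 B)]
    exact pow_succ_mul_eq_shuffleSum_add (u := v) (v := u) (by rwa [mul_comm, add_comm]) B
  | succ A ihA =>
    induction B with
    | zero => simpa using pow_succ_mul_eq_shuffleSum_add h (A + 1)
    | succ B ihB =>
      calc u ^ (A + 2) * v ^ (B + 2) = u * v * (u ^ (A + 1) * v ^ (B + 1)) := by ring
        _ = w * (u ^ (A + 2) * v ^ (B + 1) + u ^ (A + 1) * v ^ (B + 2)) := by rw [h]; ring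
        _ = _ := by
          rw [ihB, ihA, shuffleSum_succ_succ, shuffleSum_succ_succ]
          ring

end Algebra

section Nonneg

variable {α : Type*} {u v w : α → ℝ}

lemma hasSum_shuffleSum (hu : ∀ x, 0 ≤ u x) (hw : ∀ x, 0 ≤ w x) {A B : ℕ}
    {g : α → ℝ} (hg : Summable g) (hle : ∀ x, shuffleSum (u x) (w x) A B ≤ g x) :
    HasSum (fun x => shuffleSum (u x) (w x) A B)
      (∑ k ∈ range (A + 1),
        ((B + k).choose k : ℝ) * ∑' x, u x ^ (A + 1 - k) * w x ^ (B + 1 + k)) := by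
  unfold shuffleSum at hle ⊢
  refine hasSum_sum fun k hk => ?_
  have hterm (x : α) (j : ℕ) :
      0 ≤ ((B + j).choose j : ℝ) * u x ^ (A + 1 - j) * w x ^ (B + 1 + j) := by
    have := hu x; have := hw x; positivity
  have hk : Summable fun x => ((B + k).choose k : ℝ) * u x ^ (A + 1 - k) * w x ^ (B + 1 + k) :=
    hg.of_nonneg_of_le (fun x => hterm x k) fun x => (single_le_sum
      (f := fun j => ((B + j).choose j : ℝ) * u x ^ (A + 1 - j) * w x ^ (B + 1 + j))
        (fun j _ => hterm x j) hk).trans (hle x)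
  simp_rw [mul_assoc] at hk ⊢
  rw [← tsum_mul_left]
  exact hk.hasSum

lemma hasSum_shuffleSum_add (hu : ∀ x, 0 ≤ u x) (hv : ∀ x, 0 ≤ v x) (hw : ∀ x, 0 ≤ w x)
    {A B : ℕ} (h : Summable fun x => shuffleSum (u x) (w x) A B + shuffleSum (v x) (w x) B A) :
    HasSum (fun x => shuffleSum (u x) (w x) A B + shuffleSum (v x) (w x) B A)
      ((∑ k ∈ range (A + 1),
          ((B + k).choose k : ℝ) * ∑' x, u x ^ (A + 1 - k) * w x ^ (B + 1 + k)) +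
        ∑ k ∈ range (B + 1),
          ((A + k).choose k : ℝ) * ∑' x, v x ^ (B + 1 - k) * w x ^ (A + 1 + k)) :=
  have hnonneg {u : α → ℝ} (hu : ∀ x, 0 ≤ u x) (x : α) (A B : ℕ) :
      0 ≤ shuffleSum (u x) (w x) A B :=
    sum_nonneg fun _ _ => by have := hu x; have := hw x; positivity
  (hasSum_shuffleSum hu hw h fun x => le_add_of_nonneg_right (hnonneg hv x B A)).add
    (hasSum_shuffleSum hv hw h fun x => le_add_of_nonneg_left (hnonneg hu x A B))

end Nonneg

lemma tsum_ite_lt_eq_tsum_add {α : Type*} [AddCommMonoid α] [TopologicalSpace α]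
    (f : ℕ+ → ℕ+ → α) :
    ∑' p : ℕ+ × ℕ+, (if p.1 < p.2 then f p.1 p.2 else 0) =
      ∑' q : ℕ+ × ℕ+, f q.1 (q.1 + q.2) := by
  have hinj : Function.Injective fun q : ℕ+ × ℕ+ => (q.1, q.1 + q.2) := by
    rintro ⟨m, n⟩ ⟨m', n'⟩ h
    simp only [Prod.mk.injEq] at h
    obtain ⟨rfl, h⟩ := h
    simpa using h
  have hsupp : (Function.support fun p : ℕ+ × ℕ+ => if p.1 < p.2 then f p.1 p.2 else 0) ⊆
      Set.range fun q : ℕ+ × ℕ+ => (q.1, q.1 + q.2) := by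
    rintro ⟨m, n⟩ hp
    have hlt : m < n := by by_contra hlt; simp [hlt] at hp
    exact ⟨(m, n - m), by simp [PNat.add_sub_of_lt hlt]⟩
  rw [← hinj.tsum_eq hsupp]
  simp [PNat.lt_add_right]

lemma doubleZetaVal_eq_tsum (c d : ℕ) :
    doubleZetaVal c d = ∑' q : ℕ+ × ℕ+, (q.1 : ℝ)⁻¹ ^ c * ((q.1 : ℝ) + q.2)⁻¹ ^ d := by
  rw [doubleZetaVal, tsum_ite_lt_eq_tsum_add (fun m n => 1 / ((m : ℝ) ^ c * (n : ℝ) ^ d))]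
  exact tsum_congr fun q => by push_cast; ring

lemma doubleZetaVal_eq_tsum_swap (c d : ℕ) :
    doubleZetaVal c d = ∑' q : ℕ+ × ℕ+, (q.2 : ℝ)⁻¹ ^ c * ((q.1 : ℝ) + q.2)⁻¹ ^ d := by
  rw [doubleZetaVal_eq_tsum, ← (Equiv.prodComm ℕ+ ℕ+).tsum_eq]
  simp [add_comm]

lemma summable_inv_pow_pnat {a : ℕ} (ha : 2 ≤ a) : Summable fun m : ℕ+ => (m : ℝ)⁻¹ ^ a := by
  simp_rw [inv_pow]
  exact summable_pnat_iff_summable_nat.2 (Real.summable_nat_pow_inv.2 ha)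

lemma hasSum_zetaVal_mul_zetaVal {a b : ℕ} (ha : 2 ≤ a) (hb : 2 ≤ b) :
    HasSum (fun q : ℕ+ × ℕ+ => (q.1 : ℝ)⁻¹ ^ a * (q.2 : ℝ)⁻¹ ^ b) (zetaVal a * zetaVal b) := by
  have hsa := summable_inv_pow_pnat ha
  have hsb := summable_inv_pow_pnat hb
  simp_rw [zetaVal, one_div, ← inv_pow]
  exact hsa.hasSum.mul hsb.hasSum
    (hsa.mul_of_nonneg hsb (fun _ => by positivity) fun _ => by positivity)

/-- Euler's shuffle decomposition: for integers `a, b ≥ 2`,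
`ζ(a)ζ(b) = Σ_{k=0}^{a−1} C(b−1+k,k) ζ(a−k,b+k) + Σ_{k=0}^{b−1} C(a−1+k,k) ζ(b−k,a+k)`. -/
theorem euler_shuffle (a b : ℕ) (ha : 2 ≤ a) (hb : 2 ≤ b) :
    zetaVal a * zetaVal b =
      (∑ k ∈ Finset.range a, ((b - 1 + k).choose k : ℝ) * doubleZetaVal (a - k) (b + k)) +
        ∑ k ∈ Finset.range b, ((a - 1 + k).choose k : ℝ) * doubleZetaVal (b - k) (a + k) := by
  obtain ⟨A, rfl⟩ : ∃ A, a = A + 1 := ⟨a - 1, by omega⟩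
  obtain ⟨B, rfl⟩ : ∃ B, b = B + 1 := ⟨b - 1, by omega⟩
  have hpartial (q : ℕ+ × ℕ+) : (q.1 : ℝ)⁻¹ ^ (A + 1) * (q.2 : ℝ)⁻¹ ^ (B + 1) =
      shuffleSum (q.1 : ℝ)⁻¹ ((q.1 : ℝ) + q.2)⁻¹ A B +
        shuffleSum (q.2 : ℝ)⁻¹ ((q.1 : ℝ) + q.2)⁻¹ B A := by
    apply pow_mul_pow_eq_shuffleSum_add
    field_simp
    ring
  have hprod := hasSum_zetaVal_mul_zetaVal ha hb
  simp_rw [hpartial] at hprod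
  rw [hprod.unique (hasSum_shuffleSum_add (fun _ => by positivity) (fun _ => by positivity)
    (fun _ => by positivity) hprod.summable)]
  simp only [Nat.add_sub_cancel, ← doubleZetaVal_eq_tsum, ← doubleZetaVal_eq_tsum_swap]
end

section
/- Let H be a connected filtered Hopf algebra over ℚ and let A be a commutative ℚ-algebra. Then the set G(H, A) := {φ : H → A ℚ-linear with φ(1) = 1_A}, endowed with the convolution product φ ⋆ ψ := m_A ∘ (φ ⊗ ψ) ∘ Δ, forms a group with unit e = u_A ∘ ε: convolution is associative on G(H, A), e ⋆ φ = φ ⋆ e = φ for every φ ∈ G(H, A), and every φ ∈ G(H, A) has a two-sided convolution inverse lying in G(H, A). -/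
open TensorProduct

/-- Convolution product `φ ⋆ ψ = m_A ∘ (φ ⊗ ψ) ∘ Δ` on ℚ-linear maps from a
coalgebra `H` to an algebra `A`. -/
noncomputable def conv {H A : Type*} [AddCommMonoid H] [Module ℚ H] [Coalgebra ℚ H]
    [Semiring A] [Algebra ℚ A] (φ ψ : H →ₗ[ℚ] A) : H →ₗ[ℚ] A :=
  LinearMap.mul' ℚ A ∘ₗ TensorProduct.map φ ψ ∘ₗ Coalgebra.comul

/-- The convolution unit `e = u_A ∘ ε`. -/
noncomputable def convUnit {H A : Type*} [AddCommMonoid H] [Module ℚ H] [Coalgebra ℚ H]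
    [Semiring A] [Algebra ℚ A] : H →ₗ[ℚ] A :=
  Algebra.linearMap ℚ A ∘ₗ Coalgebra.counit


section Generic
variable {H A : Type*} [AddCommMonoid H] [Module ℚ H] [Coalgebra ℚ H]
  [Semiring A] [Algebra ℚ A]

lemma conv_apply (φ ψ : H →ₗ[ℚ] A) (x : H) :
    conv φ ψ x = LinearMap.mul' ℚ A (TensorProduct.map φ ψ (Coalgebra.comul x)) := rfl

lemma conv_unit_left (φ : H →ₗ[ℚ] A) : conv convUnit φ = φ := by
  ext x
  have h1 : TensorProduct.map ((Algebra.linearMap ℚ A) ∘ₗ (Coalgebra.counit (R := ℚ) (A := H))) φ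
      = TensorProduct.map (Algebra.linearMap ℚ A) φ ∘ₗ
          LinearMap.rTensor H (Coalgebra.counit (R := ℚ)) := by
    rw [LinearMap.rTensor, ← TensorProduct.map_comp, LinearMap.comp_id]
  have h2 := LinearMap.congr_fun (Coalgebra.rTensor_counit_comp_comul (R := ℚ) (A := H)) x
  simp only [LinearMap.comp_apply] at h2
  rw [conv_apply, convUnit, h1, LinearMap.comp_apply, h2]
  simp [TensorProduct.mk_apply, TensorProduct.map_tmul, LinearMap.mul'_apply]

lemma conv_unit_right (φ : H →ₗ[ℚ] A) : conv φ convUnit = φ := by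
  ext x
  have h1 : TensorProduct.map φ ((Algebra.linearMap ℚ A) ∘ₗ (Coalgebra.counit (R := ℚ) (A := H)))
      = TensorProduct.map φ (Algebra.linearMap ℚ A) ∘ₗ
          LinearMap.lTensor H (Coalgebra.counit (R := ℚ)) := by
    rw [LinearMap.lTensor, ← TensorProduct.map_comp, LinearMap.comp_id]
  have h2 := LinearMap.congr_fun (Coalgebra.lTensor_counit_comp_comul (R := ℚ) (A := H)) x
  simp only [LinearMap.comp_apply] at h2
  rw [conv_apply, convUnit, h1, LinearMap.comp_apply, h2]
  simp [TensorProduct.map_tmul, LinearMap.mul'_apply]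

lemma conv_assoc (f g h : H →ₗ[ℚ] A) : conv (conv f g) h = conv f (conv g h) := by
  ext x
  have L1 : ∀ u : H ⊗[ℚ] H, TensorProduct.map (conv f g) h u
      = LinearMap.rTensor A (LinearMap.mul' ℚ A)
          (TensorProduct.map (TensorProduct.map f g) h
            (LinearMap.rTensor H (Coalgebra.comul (R := ℚ)) u)) := by
    intro u
    induction u using TensorProduct.induction_on with
    | zero => simp
    | tmul a b =>
        simp [conv_apply, LinearMap.rTensor_tmul, TensorProduct.map_tmul]
    | add u v hu hv => simp [map_add, hu, hv]
  have L2 : ∀ u : H ⊗[ℚ] H, TensorProduct.map f (conv g h) u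
      = LinearMap.lTensor A (LinearMap.mul' ℚ A)
          (TensorProduct.map f (TensorProduct.map g h)
            (LinearMap.lTensor H (Coalgebra.comul (R := ℚ)) u)) := by
    intro u
    induction u using TensorProduct.induction_on with
    | zero => simp
    | tmul a b =>
        simp [conv_apply, LinearMap.lTensor_tmul, TensorProduct.map_tmul]
    | add u v hu hv => simp [map_add, hu, hv]
  have M : ∀ w : A ⊗[ℚ] (A ⊗[ℚ] A),
      LinearMap.mul' ℚ A (LinearMap.rTensor A (LinearMap.mul' ℚ A)
        ((TensorProduct.assoc ℚ A A A).symm w))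
      = LinearMap.mul' ℚ A (LinearMap.lTensor A (LinearMap.mul' ℚ A) w) := by
    intro w
    induction w using TensorProduct.induction_on with
    | zero =>
        rw [LinearEquiv.map_zero]
        simp
    | tmul a v =>
        induction v using TensorProduct.induction_on with
        | zero =>
            rw [TensorProduct.tmul_zero, LinearEquiv.map_zero]
            simp
        | tmul b c =>
            simp [TensorProduct.assoc_symm_tmul, LinearMap.rTensor_tmul,
              LinearMap.lTensor_tmul, LinearMap.mul'_apply, mul_assoc]
        | add v₁ v₂ h1 h2 =>
            simp only [TensorProduct.tmul_add, map_add, h1, h2]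
    | add w1 w2 h1 h2 => simp [map_add, h1, h2]
  rw [conv_apply, conv_apply, L1, L2, ← Coalgebra.coassoc_symm_apply (R := ℚ),
    TensorProduct.map_map_assoc_symm, M]

lemma conv_add_right (f g₁ g₂ : H →ₗ[ℚ] A) :
    conv f (g₁ + g₂) = conv f g₁ + conv f g₂ := by
  simp [conv, TensorProduct.map_add_right, LinearMap.comp_add, LinearMap.add_comp]

lemma conv_add_left (f₁ f₂ g : H →ₗ[ℚ] A) :
    conv (f₁ + f₂) g = conv f₁ g + conv f₂ g := by
  simp [conv, TensorProduct.map_add_left, LinearMap.comp_add, LinearMap.add_comp]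

lemma conv_sum_right {ι : Type*} (f : H →ₗ[ℚ] A) (s : Finset ι) (g : ι → (H →ₗ[ℚ] A)) :
    conv f (∑ i ∈ s, g i) = ∑ i ∈ s, conv f (g i) := by
  classical
  induction s using Finset.induction_on with
  | empty =>
      simp [conv, TensorProduct.map_zero_right]
  | insert _ _ hns ih => rw [Finset.sum_insert hns, conv_add_right, ih, Finset.sum_insert hns]

lemma conv_sum_left {ι : Type*} (g : H →ₗ[ℚ] A) (s : Finset ι) (f : ι → (H →ₗ[ℚ] A)) :
    conv (∑ i ∈ s, f i) g = ∑ i ∈ s, conv (f i) g := by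
  classical
  induction s using Finset.induction_on with
  | empty =>
      simp [conv, TensorProduct.map_zero_left]
  | insert _ _ hns ih => rw [Finset.sum_insert hns, conv_add_left, ih, Finset.sum_insert hns]

end Generic

section Ring
variable {H A : Type*} [AddCommMonoid H] [Module ℚ H] [Coalgebra ℚ H]
  [Ring A] [Algebra ℚ A]

lemma conv_sub_right (f g₁ g₂ : H →ₗ[ℚ] A) :
    conv f (g₁ - g₂) = conv f g₁ - conv f g₂ := by
  have h := conv_add_right f (g₁ - g₂) g₂
  rw [sub_add_cancel] at h
  rw [eq_sub_iff_add_eq, ← h]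

lemma conv_sub_left (f₁ f₂ g : H →ₗ[ℚ] A) :
    conv (f₁ - f₂) g = conv f₁ g - conv f₂ g := by
  have h := conv_add_left (f₁ - f₂) f₂ g
  rw [sub_add_cancel] at h
  rw [eq_sub_iff_add_eq, ← h]

end Ring

section Filtered
variable {H A : Type*} [Semiring H] [HopfAlgebra ℚ H] [CommRing A] [Algebra ℚ A]

lemma conv_one (f g : H →ₗ[ℚ] A) : conv f g 1 = f 1 * g 1 := by
  rw [conv_apply, Bialgebra.comul_one, Algebra.TensorProduct.one_def,
    TensorProduct.map_tmul, LinearMap.mul'_apply]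

lemma convUnit_one : convUnit (H := H) (A := A) 1 = 1 := by
  simp [convUnit, Bialgebra.counit_one]

lemma conv_eq_zero_of (F : ℕ → Submodule ℚ H)
    (hcomul : ∀ n, ∀ x ∈ F n, Coalgebra.comul (R := ℚ) x ∈
      ∑ pq ∈ Finset.HasAntidiagonal.antidiagonal n,
        LinearMap.range (TensorProduct.map (F pq.1).subtype (F pq.2).subtype))
    (n : ℕ) (f g : H →ₗ[ℚ] A)
    (hfg : ∀ pq ∈ Finset.HasAntidiagonal.antidiagonal n, ∀ a ∈ F pq.1, ∀ b ∈ F pq.2, f a * g b = 0)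
    (x : H) (hx : x ∈ F n) : conv f g x = 0 := by
  set D : H ⊗[ℚ] H →ₗ[ℚ] A := LinearMap.mul' ℚ A ∘ₗ TensorProduct.map f g with hD
  have hle : (∑ pq ∈ Finset.HasAntidiagonal.antidiagonal n,
      LinearMap.range (TensorProduct.map (F pq.1).subtype (F pq.2).subtype))
      ≤ LinearMap.ker D := by
    refine Finset.sum_induction _ (fun s => s ≤ LinearMap.ker D)
      (fun a b ha hb => ?_) (by simp) ?_
    · rw [Submodule.add_eq_sup]
      exact sup_le ha hb
    · intro pq hpq
      rintro u ⟨v, rfl⟩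
      have hzero : D ∘ₗ TensorProduct.map (F pq.1).subtype (F pq.2).subtype = 0 := by
        apply TensorProduct.ext'
        intro a b
        have : D ((a : H) ⊗ₜ[ℚ] (b : H)) = f a * g b := by
          simp [hD, TensorProduct.map_tmul, LinearMap.mul'_apply]
        simp only [LinearMap.comp_apply, TensorProduct.map_tmul, LinearMap.zero_apply,
          Submodule.coe_subtype]
        rw [this, hfg pq hpq a a.2 b b.2]
      simpa [LinearMap.mem_ker] using LinearMap.congr_fun hzero v
  have := hle (hcomul n x hx)
  rw [LinearMap.mem_ker] at this
  simpa [conv_apply, hD] using this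

lemma conv_congr_right (F : ℕ → Submodule ℚ H) (hmono : Monotone F)
    (hcomul : ∀ n, ∀ x ∈ F n, Coalgebra.comul (R := ℚ) x ∈
      ∑ pq ∈ Finset.HasAntidiagonal.antidiagonal n,
        LinearMap.range (TensorProduct.map (F pq.1).subtype (F pq.2).subtype))
    (n : ℕ) (f g₁ g₂ : H →ₗ[ℚ] A) (hg : ∀ b ∈ F n, g₁ b = g₂ b)
    (x : H) (hx : x ∈ F n) : conv f g₁ x = conv f g₂ x := by
  have h : conv f (g₁ - g₂) x = 0 := by
    refine conv_eq_zero_of F hcomul n f (g₁ - g₂) ?_ x hx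
    intro pq hpq a ha b hb
    have h2 : pq.2 ≤ n := by
      have := Finset.HasAntidiagonal.mem_antidiagonal.mp hpq; omega
    have : g₁ b = g₂ b := hg b (hmono h2 hb)
    simp [LinearMap.sub_apply, this]
  rw [conv_sub_right] at h
  exact sub_eq_zero.mp h

lemma conv_congr_left (F : ℕ → Submodule ℚ H) (hmono : Monotone F)
    (hcomul : ∀ n, ∀ x ∈ F n, Coalgebra.comul (R := ℚ) x ∈
      ∑ pq ∈ Finset.HasAntidiagonal.antidiagonal n,
        LinearMap.range (TensorProduct.map (F pq.1).subtype (F pq.2).subtype))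
    (n : ℕ) (f₁ f₂ g : H →ₗ[ℚ] A) (hf : ∀ a ∈ F n, f₁ a = f₂ a)
    (x : H) (hx : x ∈ F n) : conv f₁ g x = conv f₂ g x := by
  have h : conv (f₁ - f₂) g x = 0 := by
    refine conv_eq_zero_of F hcomul n (f₁ - f₂) g ?_ x hx
    intro pq hpq a ha b hb
    have h1 : pq.1 ≤ n := by
      have := Finset.HasAntidiagonal.mem_antidiagonal.mp hpq; omega
    have : f₁ a = f₂ a := hf a (hmono h1 ha)
    simp [LinearMap.sub_apply, this]
  rw [conv_sub_left] at h
  exact sub_eq_zero.mp h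

end Filtered

/-- Let `H` be a connected filtered Hopf algebra over `ℚ` (the filtration `F` satisfies
`F 0 = ℚ·1`, `⋃ F n = H`, `F m · F n ⊆ F (m+n)`, `Δ(F n) ⊆ Σ_{p+q=n} im(F p ⊗ F q)` and
`S(F n) ⊆ F n`), and let `A` be a commutative ℚ-algebra. Then
`G(H,A) = {φ : H →ₗ[ℚ] A | φ 1 = 1}` is a group under convolution: it is closed under
convolution, convolution is associative on it, `e = u_A ∘ ε` is a two-sided unit, and
every element has a two-sided convolution inverse in `G(H,A)`. -/
theorem convolution_group {H A : Type*} [Semiring H] [HopfAlgebra ℚ H]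
    [CommRing A] [Algebra ℚ A]
    (F : ℕ → Submodule ℚ H)
    (hmono : Monotone F)
    (h0 : F 0 = Submodule.span ℚ {1})
    (hsup : (⨆ n, F n) = ⊤)
    (hmul : ∀ m n, F m * F n ≤ F (m + n))
    (hcomul : ∀ n, ∀ x ∈ F n, Coalgebra.comul (R := ℚ) x ∈
      ∑ pq ∈ Finset.HasAntidiagonal.antidiagonal n,
        LinearMap.range (TensorProduct.map (F pq.1).subtype (F pq.2).subtype))
    (hantipode : ∀ n, ∀ x ∈ F n, HopfAlgebra.antipode (R := ℚ) x ∈ F n) :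
    (∀ φ ψ : H →ₗ[ℚ] A, φ 1 = 1 → ψ 1 = 1 → conv φ ψ 1 = 1) ∧
    (∀ φ ψ χ : H →ₗ[ℚ] A, φ 1 = 1 → ψ 1 = 1 → χ 1 = 1 →
      conv (conv φ ψ) χ = conv φ (conv ψ χ)) ∧
    (convUnit (H := H) (A := A) 1 = 1) ∧
    (∀ φ : H →ₗ[ℚ] A, φ 1 = 1 → conv convUnit φ = φ ∧ conv φ convUnit = φ) ∧
    (∀ φ : H →ₗ[ℚ] A, φ 1 = 1 →
      ∃ ψ : H →ₗ[ℚ] A, ψ 1 = 1 ∧ conv φ ψ = convUnit ∧ conv ψ φ = convUnit) := by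
  refine ⟨?_, ?_, ?_, ?_, ?_⟩
  · intro φ ψ hφ hψ
    rw [conv_one, hφ, hψ, one_mul]
  · intro φ ψ χ _ _ _
    exact conv_assoc φ ψ χ
  · exact convUnit_one
  · intro φ _
    exact ⟨conv_unit_left φ, conv_unit_right φ⟩
  · intro φ hφ
    classical
    set μ : H →ₗ[ℚ] A := convUnit - φ with hμ
    have hφμ : φ = convUnit - μ := by rw [hμ, sub_sub_cancel]
    have hμ1 : μ 1 = 0 := by
      rw [hμ, LinearMap.sub_apply, convUnit_one, hφ, sub_self]
    -- convolution powers of μ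
    set p : ℕ → (H →ₗ[ℚ] A) := fun k => (conv μ)^[k] convUnit with hp
    have p0 : p 0 = convUnit := rfl
    have psucc : ∀ k, p (k + 1) = conv μ (p k) := fun k =>
      Function.iterate_succ_apply' (conv μ) k convUnit
    -- partial sums
    set S : ℕ → (H →ₗ[ℚ] A) := fun n => ∑ k ∈ Finset.range (n + 1), p k with hS
    have hSapp : ∀ n x, S n x = ∑ k ∈ Finset.range (n + 1), p k x := by
      intro n x
      rw [hS]
      exact LinearMap.sum_apply _ _ _
    have hone : (1 : H) ∈ F 0 := h0 ▸ Submodule.mem_span_singleton_self 1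
    have hμF0 : ∀ a ∈ F 0, μ a = 0 := by
      intro a ha
      rw [h0, Submodule.mem_span_singleton] at ha
      obtain ⟨c, rfl⟩ := ha
      rw [map_smul, hμ1, smul_zero]
    -- vanishing of high powers
    have vanish : ∀ n, ∀ x ∈ F n, ∀ k, n < k → p k x = 0 := by
      intro n
      induction n using Nat.strong_induction_on with
      | _ n ih =>
        intro x hx k hk
        obtain ⟨j, rfl⟩ : ∃ j, k = j + 1 := ⟨k - 1, by omega⟩
        rw [psucc]
        refine conv_eq_zero_of F hcomul n μ (p j) ?_ x hx
        intro pq hpq a ha b hb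
        have hpqn := Finset.HasAntidiagonal.mem_antidiagonal.mp hpq
        by_cases h1 : pq.1 = 0
        · rw [h1] at ha
          rw [hμF0 a ha, zero_mul]
        · have h2 : pq.2 < n := by omega
          rw [ih pq.2 h2 b hb j (by omega), mul_zero]
    -- stabilization
    have stab : ∀ n m, n ≤ m → ∀ x ∈ F n, S m x = S n x := by
      intro n m hnm x hx
      rw [hSapp, hSapp]
      refine (Finset.sum_subset (Finset.range_subset_range.mpr (by omega)) ?_).symm
      intro k _ hk
      exact vanish n x hx k (by simpa using Nat.lt_of_succ_le (Nat.le_of_not_lt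
        (fun h => hk (Finset.mem_range.mpr h))))
    -- every element has a degree
    have hex : ∀ x : H, ∃ n, x ∈ F n := by
      intro x
      have hx : x ∈ ⨆ n, F n := hsup ▸ Submodule.mem_top
      exact (Submodule.mem_iSup_of_directed F hmono.directed_le).mp hx
    have agree : ∀ (x : H) (m n : ℕ), x ∈ F m → x ∈ F n → S m x = S n x := by
      intro x m n hm hn
      rw [← stab m (max m n) (le_max_left _ _) x hm,
        ← stab n (max m n) (le_max_right _ _) x hn]
    set d : H → ℕ := fun x => (hex x).choose with hdd
    have hd : ∀ x, x ∈ F (d x) := fun x => (hex x).choose_spec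
    -- the candidate inverse
    set ψ : H →ₗ[ℚ] A :=
      { toFun := fun x => S (d x) x
        map_add' := by
          intro x y
          have hx : x ∈ F (max (d x) (d y)) := hmono (le_max_left _ _) (hd x)
          have hy : y ∈ F (max (d x) (d y)) := hmono (le_max_right _ _) (hd y)
          have hxy : x + y ∈ F (max (d x) (d y)) := Submodule.add_mem _ hx hy
          show S (d (x + y)) (x + y) = S (d x) x + S (d y) y
          rw [agree (x + y) (d (x + y)) (max (d x) (d y)) (hd _) hxy, map_add,
            agree x (max (d x) (d y)) (d x) hx (hd x),
            agree y (max (d x) (d y)) (d y) hy (hd y)]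
        map_smul' := by
          intro c x
          have hcx : c • x ∈ F (d x) := Submodule.smul_mem _ _ (hd x)
          show S (d (c • x)) (c • x) = (RingHom.id ℚ) c • S (d x) x
          simp only [RingHom.id_apply]
          rw [agree (c • x) (d (c • x)) (d x) (hd _) hcx, map_smul] } with hψdef
    have ψeq : ∀ n x, x ∈ F n → ψ x = S n x := by
      intro n x hxn
      exact agree x (d x) n (hd x) hxn
    have hψ1 : ψ 1 = 1 := by
      rw [ψeq 0 1 hone, hSapp]
      simp [p0, convUnit_one]
    -- algebraic identities
    have sum_shift : ∀ n, ∑ k ∈ Finset.range (n + 1), p (k + 1) = S (n + 1) - convUnit := by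
      intro n
      have h := Finset.sum_range_succ' p (n + 1)
      have hSn : S (n + 1) = ∑ k ∈ Finset.range (n + 2), p k := rfl
      rw [hSn, h, p0, add_sub_cancel_right]
    have convμS : ∀ n, conv μ (S n) = S (n + 1) - convUnit := by
      intro n
      rw [hS]
      rw [conv_sum_right]
      rw [Finset.sum_congr rfl (fun k _ => (psucc k).symm), sum_shift]
    have comm : ∀ k, conv (p k) μ = conv μ (p k) := by
      intro k
      induction k with
      | zero => rw [p0, conv_unit_left, conv_unit_right]
      | succ k ih => rw [psucc, conv_assoc, ih]
    have convSμ : ∀ n, conv (S n) μ = S (n + 1) - convUnit := by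
      intro n
      rw [hS, conv_sum_left]
      rw [Finset.sum_congr rfl (fun k _ => by rw [comm k, ← psucc]), sum_shift]
    refine ⟨ψ, hψ1, ?_, ?_⟩
    · ext x
      have hx := hd x
      have h1 : conv φ ψ x = conv φ (S (d x)) x :=
        conv_congr_right F hmono hcomul (d x) φ ψ (S (d x)) (fun b hb => ψeq (d x) b hb) x hx
      have h2 : conv φ (S (d x)) = S (d x) - (S (d x + 1) - convUnit) := by
        rw [hφμ, conv_sub_left, conv_unit_left, convμS]
      rw [h1, h2]
      have h3 : S (d x + 1) x = S (d x) x := stab (d x) (d x + 1) (by omega) x hx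
      simp only [LinearMap.sub_apply, h3]
      ring
    · ext x
      have hx := hd x
      have h1 : conv ψ φ x = conv (S (d x)) φ x :=
        conv_congr_left F hmono hcomul (d x) ψ (S (d x)) φ (fun b hb => ψeq (d x) b hb) x hx
      have h2 : conv (S (d x)) φ = S (d x) - (S (d x + 1) - convUnit) := by
        rw [hφμ, conv_sub_right, conv_unit_right, convSμ]
      rw [h1, h2]
      have h3 : S (d x + 1) x = S (d x) x := stab (d x) (d x + 1) (by omega) x hx
      simp only [LinearMap.sub_apply, h3]
      ring
end
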